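/- arXiv:1612.06283 — 9 statements merged into one kernel-verified Lean document; each statement's English description precedes it below -/
import Mathlib

section
/- Let p ≥ 1 and C_V, C_W ≥ 0. Let V : ℝ × ℝ^p → ℝ be continuous such that for each t the map V(t,·) is three times continuously differentiable and ℤ^p-periodic, for each 0 ≤ j ≤ 3 the map (t,x) ↦ iteratedFDeriv j (V(t,·)) x is continuous, and ‖iteratedFDeriv j (V(t,·)) x‖ ≤ C_V for all (t,x) and j ≤ 3. Let W : ℝ^p → ℝ be three times continuously differentiable and ℤ^p-periodic with ‖iteratedFDeriv j W x‖ ≤ C_W for all x and j ≤ 3. Let t ↦ ψ_t be a weak*-continuous family of Borel probability measures on ℝ^p and define P(t,x) = V(t,x) + ∫_{ℝ^p} W(x − x′) dψ_t(x′). Then: (1) P is continuous on ℝ × ℝ^p; (2) for each t, P(t,·) is three times continuously differentiable and ℤ^p-periodic; (3) ‖iteratedFDeriv j (P(t,·)) x‖ ≤ C_V + C_W for all (t,x) and all 0 ≤ j ≤ 3; (4) for each 0 ≤ j ≤ 3 the map (t,x) ↦ iteratedFDeriv j (P(t,·)) x is continuous. -/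
open MeasureTheory

/-- The vector of `ℝ^p` with integer coordinates `k`. -/
def intVec (p : ℕ) (k : Fin p → ℤ) : EuclideanSpace ℝ (Fin p) := WithLp.toLp 2 (fun i => (k i : ℝ))

/-! Convolving with a probability measure commutes with differentiation of a function whose
derivatives are bounded (differentiation under the integral sign), so the derivatives of
`x ↦ ∫ W (x - y) dψ_t(y)` are the convolutions of those of `W`; smoothness, periodicity and the
bounds follow. Joint continuity in `(t, x)` combines weak*-continuity in `t` with equicontinuity
in `x`, which comes from the uniform continuity of continuous periodic functions. The derivatives
take values in finite-dimensional spaces, where weak*-continuity extends coordinatewise. -/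

instance ContinuousMultilinearMap.finiteDimensional {ι : Type*} [Fintype ι] {M : ι → Type*}
    {F : Type*} [∀ i, NormedAddCommGroup (M i)] [∀ i, NormedSpace ℝ (M i)]
    [∀ i, FiniteDimensional ℝ (M i)] [NormedAddCommGroup F] [NormedSpace ℝ F]
    [FiniteDimensional ℝ F] : FiniteDimensional ℝ (ContinuousMultilinearMap ℝ M F) :=
  .of_injective ContinuousMultilinearMap.toMultilinearMapLinear
    fun _ _ h => ContinuousMultilinearMap.toMultilinearMap_injective h

theorem continuous_of_forall_continuous_dual {X G : Type*} [TopologicalSpace X]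
    [NormedAddCommGroup G] [NormedSpace ℝ G] [FiniteDimensional ℝ G] {f : X → G}
    (hf : ∀ φ : G →L[ℝ] ℝ, Continuous fun x => φ (f x)) : Continuous f := by
  let e := (Module.finBasis ℝ G).equivFunL
  have : Continuous fun x => e (f x) :=
    continuous_pi fun i => hf ((ContinuousLinearMap.proj i).comp e.toContinuousLinearMap)
  exact (e.symm.continuous.comp this).congr fun x => e.symm_apply_apply (f x)

theorem EquicontinuousAt.continuousAt_uncurry {T X α : Type*} [TopologicalSpace T]
    [TopologicalSpace X] [PseudoMetricSpace α] {F : T → X → α} {t₀ : T} {x₀ : X}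
    (hF : EquicontinuousAt F x₀) (ht : ContinuousAt (F · x₀) t₀) :
    ContinuousAt (Function.uncurry F) (t₀, x₀) := by
  rw [ContinuousAt, Metric.tendsto_nhds]
  intro ε hε
  have hx : ∀ᶠ x in nhds x₀, ∀ t, dist (F t x₀) (F t x) < ε / 2 :=
    hF _ (Metric.dist_mem_uniformity (half_pos hε))
  have ht : ∀ᶠ t in nhds t₀, dist (F t x₀) (F t₀ x₀) < ε / 2 :=
    Metric.tendsto_nhds.1 ht _ (half_pos hε)
  rw [nhds_prod_eq]
  filter_upwards [ht.prod_mk hx] with ⟨t, x⟩ ⟨hxt, hxx⟩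
  calc dist (F t x) (F t₀ x₀) ≤ dist (F t x₀) (F t x) + dist (F t x₀) (F t₀ x₀) :=
        dist_triangle_left _ _ _
    _ < ε := by linarith [hxx t]

theorem LinearIsometryEquiv.integral_comp_comm {X E F : Type*} [MeasurableSpace X]
    {μ : Measure X} [NormedAddCommGroup E] [NormedSpace ℝ E] [NormedAddCommGroup F]
    [NormedSpace ℝ F] (L : E ≃ₗᵢ[ℝ] F) (φ : X → E) : ∫ x, L (φ x) ∂μ = L (∫ x, φ x ∂μ) :=
  L.toContinuousLinearEquiv.integral_comp_comm φ

section IntegralCompSub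

variable {E F : Type*} [NormedAddCommGroup E] [MeasurableSpace E] [NormedAddCommGroup F]
  [NormedSpace ℝ F] {μ : Measure E}

theorem norm_integral_comp_sub_le [IsProbabilityMeasure μ] {g : E → F} {C : ℝ}
    (hb : ∀ x, ‖g x‖ ≤ C) (x : E) : ‖∫ y, g (x - y) ∂μ‖ ≤ C := by
  simpa using norm_integral_le_of_norm_le_const (μ := μ) (.of_forall fun y => hb (x - y))

variable [BorelSpace E]

theorem continuous_integral_comp_sub [IsFiniteMeasure μ] [SecondCountableTopologyEither E F]
    {g : E → F} (hg : Continuous g) {C : ℝ} (hb : ∀ x, ‖g x‖ ≤ C) :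
    Continuous fun x => ∫ y, g (x - y) ∂μ :=
  continuous_of_dominated (bound := fun _ => C)
    (fun x => (hg.comp (continuous_sub_left x)).aestronglyMeasurable)
    (fun _ => .of_forall fun _ => hb _) (integrable_const C)
    (.of_forall fun y => hg.comp (continuous_sub_right y))

variable [NormedSpace ℝ E] [SecondCountableTopology E]

theorem hasFDerivAt_integral_comp_sub [IsFiniteMeasure μ] {g : E → F} (hg : Differentiable ℝ g)
    (hg' : Continuous (fderiv ℝ g)) {C C' : ℝ} (hb : ∀ x, ‖g x‖ ≤ C)
    (hb' : ∀ x, ‖fderiv ℝ g x‖ ≤ C') (x₀ : E) :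
    HasFDerivAt (fun x => ∫ y, g (x - y) ∂μ) (∫ y, fderiv ℝ g (x₀ - y) ∂μ) x₀ :=
  hasFDerivAt_integral_of_dominated_of_fderiv_le (F' := fun x y => fderiv ℝ g (x - y))
    (bound := fun _ => C') Filter.univ_mem
    (.of_forall fun x => (hg.continuous.comp (continuous_sub_left x)).aestronglyMeasurable)
    (.of_bound (hg.continuous.comp (continuous_sub_left x₀)).aestronglyMeasurable C
      (.of_forall fun _ => hb _))
    (hg'.comp (continuous_sub_left x₀)).aestronglyMeasurable
    (.of_forall fun _ _ _ => hb' _) (integrable_const C')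
    (.of_forall fun y x _ => (hg (x - y)).hasFDerivAt.comp x ((hasFDerivAt_id x).sub_const y))

theorem hasFTaylorSeriesUpTo_integral_comp_sub [CompleteSpace F] [IsFiniteMeasure μ] {n : ℕ}
    {g : E → F} (hg : ContDiff ℝ n g) {C : ℝ}
    (hb : ∀ j ≤ n, ∀ x, ‖iteratedFDeriv ℝ j g x‖ ≤ C) :
    HasFTaylorSeriesUpTo n (fun x => ∫ y, g (x - y) ∂μ)
      (fun x j => ∫ y, iteratedFDeriv ℝ j g (x - y) ∂μ) where
  zero_eq x := by
    simpa using ((continuousMultilinearCurryFin0 ℝ E F).integral_comp_comm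
      (μ := μ) (fun y => iteratedFDeriv ℝ 0 g (x - y))).symm
  fderiv m hm x := by
    have hm : m < n := by exact_mod_cast hm
    have hcurry : ∫ y, fderiv ℝ (iteratedFDeriv ℝ m g) (x - y) ∂μ
        = (∫ y, iteratedFDeriv ℝ (m + 1) g (x - y) ∂μ).curryLeft := by
      simp only [fderiv_iteratedFDeriv, Function.comp_apply]
      exact LinearIsometryEquiv.integral_comp_comm _ _
    rw [← hcurry]
    refine hasFDerivAt_integral_comp_sub (hg.differentiable_iteratedFDeriv (by exact_mod_cast hm))
      ?_ (hb m hm.le) (C' := C) (fun z => ?_) x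
    · rw [fderiv_iteratedFDeriv]
      exact (LinearIsometryEquiv.continuous _).comp
        (hg.continuous_iteratedFDeriv (by exact_mod_cast hm))
    · rw [norm_fderiv_iteratedFDeriv]
      exact hb (m + 1) hm z
  cont m hm :=
    continuous_integral_comp_sub (hg.continuous_iteratedFDeriv hm) (hb m (by exact_mod_cast hm))

end IntegralCompSub

def IsWeakStarContinuous {T E : Type*} [TopologicalSpace T] [TopologicalSpace E]
    [MeasurableSpace E] (ψ : T → Measure E) : Prop :=
  ∀ f : E → ℝ, Continuous f → (∃ C, ∀ x, |f x| ≤ C) → Continuous fun t => ∫ x, f x ∂(ψ t)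

namespace IsWeakStarContinuous

variable {T E G : Type*} [TopologicalSpace T] [NormedAddCommGroup E] [MeasurableSpace E]
  [BorelSpace E] [NormedAddCommGroup G] [NormedSpace ℝ G] [FiniteDimensional ℝ G]
  {ψ : T → Measure E}

theorem continuous_integral [∀ t, IsFiniteMeasure (ψ t)] (hψ : IsWeakStarContinuous ψ)
    {f : E → G} (hf : Continuous f) {C : ℝ} (hb : ∀ x, ‖f x‖ ≤ C) :
    Continuous fun t => ∫ x, f x ∂(ψ t) := by
  refine continuous_of_forall_continuous_dual fun φ => ?_
  have hφ : (fun t => φ (∫ x, f x ∂(ψ t))) = fun t => ∫ x, φ (f x) ∂(ψ t) :=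
    funext fun t => (φ.integral_comp_comm
      (.of_bound hf.aestronglyMeasurable C (.of_forall hb))).symm
  rw [hφ]
  refine hψ _ (φ.continuous.comp hf) ⟨‖φ‖ * C, fun x => ?_⟩
  rw [← Real.norm_eq_abs]
  exact (φ.le_opNorm _).trans (mul_le_mul_of_nonneg_left (hb x) (norm_nonneg φ))

theorem continuous_integral_comp_sub [∀ t, IsProbabilityMeasure (ψ t)]
    (hψ : IsWeakStarContinuous ψ) {g : E → G} (hg : UniformContinuous g) {C : ℝ}
    (hb : ∀ x, ‖g x‖ ≤ C) :
    Continuous fun q : T × E => ∫ y, g (q.2 - y) ∂(ψ q.1) := by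
  have hint : ∀ t x, Integrable (fun y => g (x - y)) (ψ t) := fun t x =>
    .of_bound (hg.continuous.comp (continuous_sub_left x)).aestronglyMeasurable C
      (.of_forall fun _ => hb _)
  have hequi : UniformEquicontinuous fun t x => ∫ y, g (x - y) ∂(ψ t) := by
    rw [Metric.uniformEquicontinuous_iff]
    intro ε hε
    obtain ⟨δ, hδ, hgδ⟩ := Metric.uniformContinuous_iff.1 hg (ε / 2) (half_pos hε)
    refine ⟨δ, hδ, fun x x' hxx' t => ?_⟩
    have hclose : ∀ y, ‖g (x - y) - g (x' - y)‖ ≤ ε / 2 := fun y => by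
      rw [← dist_eq_norm]
      exact (hgδ (by rwa [dist_sub_right])).le
    rw [dist_eq_norm, ← integral_sub (hint t x) (hint t x')]
    calc ‖∫ y, g (x - y) - g (x' - y) ∂(ψ t)‖ ≤ ε / 2 := by
          simpa using norm_integral_le_of_norm_le_const (μ := ψ t) (.of_forall hclose)
      _ < ε := half_lt_self hε
  refine continuous_iff_continuousAt.2 fun ⟨t₀, x₀⟩ => ?_
  have ht : Continuous fun t => ∫ y, g (x₀ - y) ∂(ψ t) :=
    hψ.continuous_integral (hg.continuous.comp (continuous_sub_left x₀)) fun _ => hb _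
  exact (hequi.equicontinuous x₀).continuousAt_uncurry ht.continuousAt

end IsWeakStarContinuous

section Periodic

variable {p : ℕ}

theorem iteratedFDeriv_add_intVec {F : Type*} [NormedAddCommGroup F] [NormedSpace ℝ F]
    {f : EuclideanSpace ℝ (Fin p) → F} (hf : ∀ x k, f (x + intVec p k) = f x) (n : ℕ)
    (x : EuclideanSpace ℝ (Fin p)) (k : Fin p → ℤ) :
    iteratedFDeriv ℝ n f (x + intVec p k) = iteratedFDeriv ℝ n f x := by
  rw [← iteratedFDeriv_comp_add_right]
  simp only [hf]

theorem exists_norm_add_intVec_le (x : EuclideanSpace ℝ (Fin p)) :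
    ∃ k, ‖x + intVec p k‖ ≤ √p := by
  refine ⟨fun i => -⌊x i⌋, ?_⟩
  have hfract : ∀ i, ‖(x + intVec p fun i => -⌊x i⌋) i‖ ^ 2 ≤ 1 := fun i => by
    have : (x + intVec p fun i => -⌊x i⌋) i = Int.fract (x i) := by
      simp [intVec, Int.fract, sub_eq_add_neg]
    rw [this, Real.norm_of_nonneg (Int.fract_nonneg _)]
    exact pow_le_one₀ (Int.fract_nonneg _) (Int.fract_lt_one _).le
  rw [EuclideanSpace.norm_eq]
  gcongr
  simpa using Finset.sum_le_sum (s := Finset.univ) fun i _ => hfract i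

theorem uniformContinuous_of_add_intVec {G : Type*} [PseudoMetricSpace G]
    {f : EuclideanSpace ℝ (Fin p) → G} (hf : Continuous f)
    (hper : ∀ x k, f (x + intVec p k) = f x) : UniformContinuous f := by
  have hK := isCompact_closedBall (0 : EuclideanSpace ℝ (Fin p)) (√p + 1)
  rw [Metric.uniformContinuous_iff]
  intro ε hε
  obtain ⟨δ, hδ, hfδ⟩ :=
    Metric.uniformContinuousOn_iff.1 (hK.uniformContinuousOn_of_continuous hf.continuousOn) ε hε
  refine ⟨min δ 1, by positivity, fun {x y} hxy => ?_⟩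
  obtain ⟨k, hk⟩ := exists_norm_add_intVec_le x
  have hxy' : dist (x + intVec p k) (y + intVec p k) < min δ 1 := by rwa [dist_add_right]
  rw [← hper x k, ← hper y k]
  refine hfδ _ (mem_closedBall_zero_iff.2 (by linarith)) _ (mem_closedBall_zero_iff.2 ?_)
    (hxy'.trans_le (min_le_left _ _))
  calc ‖y + intVec p k‖ ≤ ‖x + intVec p k‖ + dist (x + intVec p k) (y + intVec p k) := by
        rw [dist_eq_norm]; exact norm_le_norm_add_norm_sub _ _
    _ ≤ √p + 1 := by linarith [hxy'.trans_le (min_le_right _ _)]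

end Periodic

theorem stmt0_general
    (p : ℕ) (C_V C_W : ℝ)
    (V : ℝ → EuclideanSpace ℝ (Fin p) → ℝ)
    (hVcont : Continuous fun q : ℝ × EuclideanSpace ℝ (Fin p) => V q.1 q.2)
    (hVsmooth : ∀ t, ContDiff ℝ 3 (V t))
    (hVper : ∀ t (x : EuclideanSpace ℝ (Fin p)) (k : Fin p → ℤ),
      V t (x + intVec p k) = V t x)
    (hVderiv_cont : ∀ j ≤ 3, Continuous fun q : ℝ × EuclideanSpace ℝ (Fin p) =>
      iteratedFDeriv ℝ j (V q.1) q.2)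
    (hVbound : ∀ j ≤ 3, ∀ t x, ‖iteratedFDeriv ℝ j (V t) x‖ ≤ C_V)
    (W : EuclideanSpace ℝ (Fin p) → ℝ)
    (hWsmooth : ContDiff ℝ 3 W)
    (hWper : ∀ (x : EuclideanSpace ℝ (Fin p)) (k : Fin p → ℤ),
      W (x + intVec p k) = W x)
    (hWbound : ∀ j ≤ 3, ∀ x, ‖iteratedFDeriv ℝ j W x‖ ≤ C_W)
    (ψ : ℝ → Measure (EuclideanSpace ℝ (Fin p)))
    (hψprob : ∀ t, IsProbabilityMeasure (ψ t))
    (hψcont : ∀ f : EuclideanSpace ℝ (Fin p) → ℝ, Continuous f → (∃ C, ∀ x, |f x| ≤ C) →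
      Continuous fun t => ∫ x, f x ∂(ψ t))
    (P : ℝ → EuclideanSpace ℝ (Fin p) → ℝ)
    (hP : ∀ t x, P t x = V t x + ∫ x', W (x - x') ∂(ψ t)) :
    (Continuous fun q : ℝ × EuclideanSpace ℝ (Fin p) => P q.1 q.2) ∧
    (∀ t, ContDiff ℝ 3 (P t)) ∧
    (∀ t (x : EuclideanSpace ℝ (Fin p)) (k : Fin p → ℤ),
      P t (x + intVec p k) = P t x) ∧
    (∀ j ≤ 3, ∀ t x, ‖iteratedFDeriv ℝ j (P t) x‖ ≤ C_V + C_W) ∧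
    (∀ j ≤ 3, Continuous fun q : ℝ × EuclideanSpace ℝ (Fin p) =>
      iteratedFDeriv ℝ j (P q.1) q.2) := by
  have hψ : IsWeakStarContinuous ψ := hψcont
  have hPt : ∀ t, P t = fun x => V t x + ∫ y, W (x - y) ∂(ψ t) := fun t => funext (hP t)
  have hTaylor : ∀ t, HasFTaylorSeriesUpTo 3 (fun x => ∫ y, W (x - y) ∂(ψ t))
      (fun x j => ∫ y, iteratedFDeriv ℝ j W (x - y) ∂(ψ t)) := fun t =>
    hasFTaylorSeriesUpTo_integral_comp_sub hWsmooth hWbound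
  have hiter : ∀ j ≤ 3, ∀ t x, iteratedFDeriv ℝ j (P t) x
      = iteratedFDeriv ℝ j (V t) x + ∫ y, iteratedFDeriv ℝ j W (x - y) ∂(ψ t) := by
    intro j hj t x
    rw [hPt, fun_iteratedFDeriv_add_apply ((hVsmooth t).contDiffAt.of_le (by exact_mod_cast hj))
      ((hTaylor t).contDiff.contDiffAt.of_le (by exact_mod_cast hj)),
      (hTaylor t).eq_iteratedFDeriv (by exact_mod_cast hj)]
  have hWunif : ∀ j ≤ 3, UniformContinuous (iteratedFDeriv ℝ j W) := fun j hj =>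
    uniformContinuous_of_add_intVec (hWsmooth.continuous_iteratedFDeriv (by exact_mod_cast hj))
      (iteratedFDeriv_add_intVec hWper j)
  refine ⟨?_, fun t => ?_, fun t x k => ?_, fun j hj t x => ?_, fun j hj => ?_⟩
  · simp only [hP]
    exact hVcont.add (hψ.continuous_integral_comp_sub
      (uniformContinuous_of_add_intVec hWsmooth.continuous hWper)
      (fun x => by simpa using hWbound 0 (by norm_num) x))
  · rw [hPt]
    exact (hVsmooth t).add (hTaylor t).contDiff
  · simp only [hP, hVper, add_sub_right_comm, hWper]
  · rw [hiter j hj]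
    exact (norm_add_le _ _).trans
      (add_le_add (hVbound j hj t x) (norm_integral_comp_sub_le (hWbound j hj) x))
  · simp only [hiter j hj]
    exact (hVderiv_cont j hj).add (hψ.continuous_integral_comp_sub (hWunif j hj) (hWbound j hj))

/-- continuity, smoothness, periodicity and uniform `C³` bounds for the
interaction potential `P(t,x) = V(t,x) + ∫ W(x - x') dψ_t(x')`. -/
theorem stmt0
    (p : ℕ) (hp : 1 ≤ p) (C_V C_W : ℝ) (hCV : 0 ≤ C_V) (hCW : 0 ≤ C_W)
    (V : ℝ → EuclideanSpace ℝ (Fin p) → ℝ)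
    (hVcont : Continuous fun q : ℝ × EuclideanSpace ℝ (Fin p) => V q.1 q.2)
    (hVsmooth : ∀ t, ContDiff ℝ 3 (V t))
    (hVper : ∀ t (x : EuclideanSpace ℝ (Fin p)) (k : Fin p → ℤ),
      V t (x + intVec p k) = V t x)
    (hVderiv_cont : ∀ j ≤ 3, Continuous fun q : ℝ × EuclideanSpace ℝ (Fin p) =>
      iteratedFDeriv ℝ j (V q.1) q.2)
    (hVbound : ∀ j ≤ 3, ∀ t x, ‖iteratedFDeriv ℝ j (V t) x‖ ≤ C_V)
    (W : EuclideanSpace ℝ (Fin p) → ℝ)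
    (hWsmooth : ContDiff ℝ 3 W)
    (hWper : ∀ (x : EuclideanSpace ℝ (Fin p)) (k : Fin p → ℤ),
      W (x + intVec p k) = W x)
    (hWbound : ∀ j ≤ 3, ∀ x, ‖iteratedFDeriv ℝ j W x‖ ≤ C_W)
    (ψ : ℝ → Measure (EuclideanSpace ℝ (Fin p)))
    (hψprob : ∀ t, IsProbabilityMeasure (ψ t))
    (hψcont : ∀ f : EuclideanSpace ℝ (Fin p) → ℝ, Continuous f → (∃ C, ∀ x, |f x| ≤ C) →
      Continuous fun t => ∫ x, f x ∂(ψ t))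
    (P : ℝ → EuclideanSpace ℝ (Fin p) → ℝ)
    (hP : ∀ t x, P t x = V t x + ∫ x', W (x - x') ∂(ψ t)) :
    (Continuous fun q : ℝ × EuclideanSpace ℝ (Fin p) => P q.1 q.2) ∧
    (∀ t, ContDiff ℝ 3 (P t)) ∧
    (∀ t (x : EuclideanSpace ℝ (Fin p)) (k : Fin p → ℤ),
      P t (x + intVec p k) = P t x) ∧
    (∀ j ≤ 3, ∀ t x, ‖iteratedFDeriv ℝ j (P t) x‖ ≤ C_V + C_W) ∧
    (∀ j ≤ 3, Continuous fun q : ℝ × EuclideanSpace ℝ (Fin p) =>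
      iteratedFDeriv ℝ j (P q.1) q.2) :=
  stmt0_general p C_V C_W V hVcont hVsmooth hVper hVderiv_cont hVbound W hWsmooth hWper hWbound ψ
    hψprob hψcont P hP
end

section
/- Let K be a nonempty compact topological space and let v₁, v₂ : K → ℝ be continuous and strictly positive everywhere. Then θ(v₁, v₂) ≤ Real.log ( (sSup (range v₂) / sInf (range v₁)) * (sSup (range v₁) / sInf (range v₂)) ), i.e. θ(v₁,v₂) ≤ log( (max v₂ · max v₁) / (min v₁ · min v₂) ). -/
/-- `α(v₁,v₂) = sup { t > 0 : t·v₁ < v₂ pointwise }`. -/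
noncomputable def birkhoffAlpha {K : Type*} (v₁ v₂ : K → ℝ) : ℝ :=
  sSup {t : ℝ | 0 < t ∧ ∀ x : K, t * v₁ x < v₂ x}

/-- The Birkhoff–Hilbert projective distance `θ(v₁,v₂) = −log(α(v₁,v₂)·α(v₂,v₁))`. -/
noncomputable def birkhoffTheta {K : Type*} (v₁ v₂ : K → ℝ) : ℝ :=
  -Real.log (birkhoffAlpha v₁ v₂ * birkhoffAlpha v₂ v₁)

lemma alpha_ge {K : Type*} [TopologicalSpace K] [CompactSpace K] [Nonempty K]
    (v₁ v₂ : K → ℝ) (hc1 : Continuous v₁) (hc2 : Continuous v₂)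
    (hp1 : ∀ x, 0 < v₁ x) (hp2 : ∀ x, 0 < v₂ x) :
    sInf (Set.range v₂) / sSup (Set.range v₁) ≤ birkhoffAlpha v₁ v₂ := by
  have hK1 : IsCompact (Set.range v₁) := isCompact_range hc1
  have hK2 : IsCompact (Set.range v₂) := isCompact_range hc2
  have hne1 : (Set.range v₁).Nonempty := Set.range_nonempty _
  have hne2 : (Set.range v₂).Nonempty := Set.range_nonempty _
  set M₁ := sSup (Set.range v₁) with hM₁
  set m₁ := sInf (Set.range v₁) with hm₁
  set M₂ := sSup (Set.range v₂) with hM₂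
  set m₂ := sInf (Set.range v₂) with hm₂
  obtain ⟨x₁, hx₁⟩ := hK1.sSup_mem hne1
  obtain ⟨y₁, hy₁⟩ := hK1.sInf_mem hne1
  obtain ⟨x₂, hx₂⟩ := hK2.sSup_mem hne2
  obtain ⟨y₂, hy₂⟩ := hK2.sInf_mem hne2
  have hM₁pos : 0 < M₁ := by rw [hM₁, ← hx₁]; exact hp1 x₁
  have hm₁pos : 0 < m₁ := by rw [hm₁, ← hy₁]; exact hp1 y₁
  have hM₂pos : 0 < M₂ := by rw [hM₂, ← hx₂]; exact hp2 x₂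
  have hm₂pos : 0 < m₂ := by rw [hm₂, ← hy₂]; exact hp2 y₂
  have hle1 : ∀ x, v₁ x ≤ M₁ := fun x => le_csSup hK1.bddAbove ⟨x, rfl⟩
  have hge1 : ∀ x, m₁ ≤ v₁ x := fun x => csInf_le hK1.bddBelow ⟨x, rfl⟩
  have hle2 : ∀ x, v₂ x ≤ M₂ := fun x => le_csSup hK2.bddAbove ⟨x, rfl⟩
  have hge2 : ∀ x, m₂ ≤ v₂ x := fun x => csInf_le hK2.bddBelow ⟨x, rfl⟩
  set S := {t : ℝ | 0 < t ∧ ∀ x : K, t * v₁ x < v₂ x} with hS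
  have hbdd : BddAbove S := by
    refine ⟨M₂ / m₁, fun t ht => ?_⟩
    obtain ⟨htpos, hlt⟩ := ht
    have x0 : K := Classical.arbitrary K
    have h1 : t * m₁ ≤ t * v₁ x0 := by
      exact mul_le_mul_of_nonneg_left (hge1 x0) htpos.le
    have h2 : t * m₁ < M₂ := lt_of_le_of_lt h1 (lt_of_lt_of_le (hlt x0) (hle2 x0))
    rw [le_div_iff₀ hm₁pos]
    exact h2.le
  have hq : 0 < m₂ / M₁ := div_pos hm₂pos hM₁pos
  have hmem : ∀ t : ℝ, 0 < t → t < m₂ / M₁ → t ∈ S := by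
    intro t htpos htlt
    refine ⟨htpos, fun x => ?_⟩
    have h1 : t * v₁ x ≤ t * M₁ := mul_le_mul_of_nonneg_left (hle1 x) htpos.le
    have h2 : t * M₁ < m₂ := (lt_div_iff₀ hM₁pos).mp htlt
    exact lt_of_le_of_lt h1 (lt_of_lt_of_le h2 (hge2 x))
  have hαpos : 0 < birkhoffAlpha v₁ v₂ := by
    have : m₂ / M₁ / 2 ∈ S := hmem _ (by positivity) (by linarith)
    exact lt_of_lt_of_le (by positivity) (le_csSup hbdd this)
  by_contra h
  push_neg at h
  set t := (birkhoffAlpha v₁ v₂ + m₂ / M₁) / 2 with ht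
  have htpos : 0 < t := by positivity
  have htlt : t < m₂ / M₁ := by rw [ht]; linarith
  have : t ≤ birkhoffAlpha v₁ v₂ := le_csSup hbdd (hmem t htpos htlt)
  rw [ht] at this
  linarith

/-- `θ(v₁,v₂) ≤ log( (max v₂ / min v₁) · (max v₁ / min v₂) )`. -/
theorem stmt1 (K : Type*) [TopologicalSpace K] [CompactSpace K] [Nonempty K]
    (v₁ v₂ : K → ℝ) (hc1 : Continuous v₁) (hc2 : Continuous v₂)
    (hp1 : ∀ x, 0 < v₁ x) (hp2 : ∀ x, 0 < v₂ x) :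
    birkhoffTheta v₁ v₂ ≤
      Real.log ((sSup (Set.range v₂) / sInf (Set.range v₁)) *
        (sSup (Set.range v₁) / sInf (Set.range v₂))) := by
  have hK1 : IsCompact (Set.range v₁) := isCompact_range hc1
  have hK2 : IsCompact (Set.range v₂) := isCompact_range hc2
  have hne1 : (Set.range v₁).Nonempty := Set.range_nonempty _
  have hne2 : (Set.range v₂).Nonempty := Set.range_nonempty _
  set M₁ := sSup (Set.range v₁) with hM₁
  set m₁ := sInf (Set.range v₁) with hm₁
  set M₂ := sSup (Set.range v₂) with hM₂
  set m₂ := sInf (Set.range v₂) with hm₂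
  obtain ⟨x₁, hx₁⟩ := hK1.sSup_mem hne1
  obtain ⟨y₁, hy₁⟩ := hK1.sInf_mem hne1
  obtain ⟨x₂, hx₂⟩ := hK2.sSup_mem hne2
  obtain ⟨y₂, hy₂⟩ := hK2.sInf_mem hne2
  have hM₁pos : 0 < M₁ := by rw [hM₁, ← hx₁]; exact hp1 x₁
  have hm₁pos : 0 < m₁ := by rw [hm₁, ← hy₁]; exact hp1 y₁
  have hM₂pos : 0 < M₂ := by rw [hM₂, ← hx₂]; exact hp2 x₂
  have hm₂pos : 0 < m₂ := by rw [hm₂, ← hy₂]; exact hp2 y₂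
  have ha : m₂ / M₁ ≤ birkhoffAlpha v₁ v₂ := alpha_ge v₁ v₂ hc1 hc2 hp1 hp2
  have hb : m₁ / M₂ ≤ birkhoffAlpha v₂ v₁ := alpha_ge v₂ v₁ hc2 hc1 hp2 hp1
  have hapos : 0 < birkhoffAlpha v₁ v₂ := lt_of_lt_of_le (by positivity) ha
  have hbpos : 0 < birkhoffAlpha v₂ v₁ := lt_of_lt_of_le (by positivity) hb
  have hprod : m₂ / M₁ * (m₁ / M₂) ≤ birkhoffAlpha v₁ v₂ * birkhoffAlpha v₂ v₁ := by
    apply mul_le_mul ha hb (by positivity) hapos.le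
  have hinv : (birkhoffAlpha v₁ v₂ * birkhoffAlpha v₂ v₁)⁻¹ ≤ (m₂ / M₁ * (m₁ / M₂))⁻¹ :=
    inv_anti₀ (by positivity) hprod
  rw [birkhoffTheta, ← Real.log_inv]
  have hgoal : (m₂ / M₁ * (m₁ / M₂))⁻¹ = M₂ / m₁ * (M₁ / m₂) := by
    field_simp
  calc Real.log (birkhoffAlpha v₁ v₂ * birkhoffAlpha v₂ v₁)⁻¹
      ≤ Real.log ((m₂ / M₁ * (m₁ / M₂))⁻¹) :=
        Real.log_le_log (by positivity) hinv
    _ = Real.log (M₂ / m₁ * (M₁ / m₂)) := by rw [hgoal]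
end

section
/- Let K be a nonempty compact metric space and μ a Borel probability measure on K. Let v : K → ℝ and v_n : K → ℝ (n ∈ ℕ) be continuous and strictly positive everywhere, with ∫ v dμ = 1 and ∫ v_n dμ = 1 for all n. Then θ(v_n, v) → 0 as n → ∞ if and only if v_n converges to v uniformly on K. -/
open MeasureTheory Filter

/-!
On a compact space the supremum `α(v₁, v₂)` is attained: it is the minimum of `v₂ / v₁`, so
`α(v₁, v₂) v₁ ≤ v₂` with equality somewhere. Integrating this inequality against `μ` gives
`α ≤ 1` for normalized densities, in both orders; hence `θ(vₙ, v) → 0`, i.e.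
`α(vₙ, v) α(v, vₙ) → 1`, holds iff both factors tend to `1`. The latter is equivalent to uniform
convergence: `α(v, vₙ) v ≤ vₙ ≤ α(vₙ, v)⁻¹ v` squeezes `vₙ` uniformly onto the bounded `v`, and
conversely, since `v` is bounded below by a positive constant, uniform convergence gives
`c v < vₙ` and `c vₙ < v` everywhere for any `c < 1` and large `n`.
-/

open Topology

section Alpha

variable {K : Type*} {v₁ v₂ : K → ℝ}

theorem birkhoffAlpha_le_div {x : K} (h₁ : 0 < v₁ x) (h₂ : 0 ≤ v₂ x) :
    birkhoffAlpha v₁ v₂ ≤ v₂ x / v₁ x :=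
  Real.sSup_le (fun _ ht => ((lt_div_iff₀ h₁).2 (ht.2 x)).le) (div_nonneg h₂ h₁.le)

theorem birkhoffAlpha_mul_le {x : K} (h₁ : 0 < v₁ x) (h₂ : 0 ≤ v₂ x) :
    birkhoffAlpha v₁ v₂ * v₁ x ≤ v₂ x :=
  (le_div_iff₀ h₁).1 (birkhoffAlpha_le_div h₁ h₂)

theorem birkhoffAlpha_le_one [MeasurableSpace K] {μ : Measure K} (p₁ : ∀ x, 0 < v₁ x)
    (p₂ : ∀ x, 0 ≤ v₂ x) (h₁ : ∫ x, v₁ x ∂μ = 1) (h₂ : ∫ x, v₂ x ∂μ = 1) :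
    birkhoffAlpha v₁ v₂ ≤ 1 := by
  have := integral_mono ((integrable_of_integral_eq_one h₁).const_mul (birkhoffAlpha v₁ v₂))
    (integrable_of_integral_eq_one h₂) fun x => birkhoffAlpha_mul_le (p₁ x) (p₂ x)
  rwa [integral_const_mul, h₁, h₂, mul_one] at this

variable [TopologicalSpace K] [CompactSpace K] [Nonempty K]

theorem exists_birkhoffAlpha_eq_div (h₁ : Continuous v₁) (h₂ : Continuous v₂)
    (p₁ : ∀ x, 0 < v₁ x) (p₂ : ∀ x, 0 < v₂ x) :
    ∃ x₀, birkhoffAlpha v₁ v₂ = v₂ x₀ / v₁ x₀ := by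
  obtain ⟨x₀, -, hmin⟩ := isCompact_univ.exists_isMinOn Set.univ_nonempty
    (h₂.div h₁ fun x => (p₁ x).ne').continuousOn
  have hset : {t : ℝ | 0 < t ∧ ∀ x, t * v₁ x < v₂ x} = Set.Ioo 0 (v₂ x₀ / v₁ x₀) := by
    ext t
    refine ⟨fun ⟨ht, h⟩ => ⟨ht, (lt_div_iff₀ (p₁ x₀)).2 (h x₀)⟩, fun ⟨ht, h⟩ => ⟨ht, fun x => ?_⟩⟩
    exact (lt_div_iff₀ (p₁ x)).1 (h.trans_le (hmin (Set.mem_univ x)))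
  exact ⟨x₀, by rw [birkhoffAlpha, hset, csSup_Ioo (div_pos (p₂ x₀) (p₁ x₀))]⟩

theorem birkhoffAlpha_pos (h₁ : Continuous v₁) (h₂ : Continuous v₂)
    (p₁ : ∀ x, 0 < v₁ x) (p₂ : ∀ x, 0 < v₂ x) : 0 < birkhoffAlpha v₁ v₂ := by
  obtain ⟨x₀, hx₀⟩ := exists_birkhoffAlpha_eq_div h₁ h₂ p₁ p₂
  exact hx₀ ▸ div_pos (p₂ x₀) (p₁ x₀)

theorem lt_birkhoffAlpha_of_forall_mul_lt (h₁ : Continuous v₁) (h₂ : Continuous v₂)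
    (p₁ : ∀ x, 0 < v₁ x) (p₂ : ∀ x, 0 < v₂ x) {c : ℝ} (hc : ∀ x, c * v₁ x < v₂ x) :
    c < birkhoffAlpha v₁ v₂ := by
  obtain ⟨x₀, hx₀⟩ := exists_birkhoffAlpha_eq_div h₁ h₂ p₁ p₂
  exact hx₀ ▸ (lt_div_iff₀ (p₁ x₀)).2 (hc x₀)

end Alpha

section Limits

variable {ι K : Type*} {l : Filter ι}

theorem tendsto_neg_log_nhds_zero_iff {f : ι → ℝ} (hf : ∀ i, 0 < f i) :
    Tendsto (fun i => -Real.log (f i)) l (𝓝 0) ↔ Tendsto f l (𝓝 1) := by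
  constructor
  · intro h
    have := (Real.continuous_exp.tendsto 0).comp (neg_zero (G := ℝ) ▸ h.neg)
    simp only [Function.comp_def, neg_neg, Real.exp_zero] at this
    exact this.congr fun i => Real.exp_log (hf i)
  · intro h
    simpa using ((Real.continuousAt_log one_ne_zero).tendsto.comp h).neg

theorem tendsto_mul_nhds_one_iff_of_le_one {a b : ι → ℝ} (ha₀ : ∀ i, 0 ≤ a i)
    (hb₀ : ∀ i, 0 ≤ b i) (ha : ∀ i, a i ≤ 1) (hb : ∀ i, b i ≤ 1) :
    Tendsto (fun i => a i * b i) l (𝓝 1) ↔ Tendsto a l (𝓝 1) ∧ Tendsto b l (𝓝 1) := by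
  refine ⟨fun h => ⟨?_, ?_⟩, fun ⟨ha', hb'⟩ => by simpa using ha'.mul hb'⟩
  · exact tendsto_of_tendsto_of_tendsto_of_le_of_le h tendsto_const_nhds
      (fun i => mul_le_of_le_one_right (ha₀ i) (hb i)) ha
  · exact tendsto_of_tendsto_of_tendsto_of_le_of_le h tendsto_const_nhds
      (fun i => mul_le_of_le_one_left (hb₀ i) (ha i)) hb

variable {F : ι → K → ℝ} {f : K → ℝ} {δ : ℝ}

theorem TendstoUniformly.eventually_mul_limit_lt (hF : TendstoUniformly F f l) (hδ : 0 < δ)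
    (hfδ : ∀ x, δ ≤ f x) {c : ℝ} (hc : c < 1) : ∀ᶠ i in l, ∀ x, c * f x < F i x := by
  filter_upwards [Metric.tendstoUniformly_iff.1 hF _ (mul_pos (sub_pos.2 hc) hδ)] with i hi x
  have := (abs_sub_lt_iff.1 (Real.dist_eq _ _ ▸ hi x)).1
  nlinarith [hfδ x]

theorem TendstoUniformly.eventually_mul_lt_limit (hF : TendstoUniformly F f l) (hδ : 0 < δ)
    (hfδ : ∀ x, δ ≤ f x) {c : ℝ} (hc₀ : 0 < c) (hc : c < 1) :
    ∀ᶠ i in l, ∀ x, c * F i x < f x := by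
  filter_upwards [Metric.tendstoUniformly_iff.1 hF _
    (div_pos (mul_pos (sub_pos.2 hc) hδ) hc₀)] with i hi x
  have := (abs_sub_lt_iff.1 (Real.dist_eq _ _ ▸ hi x)).2
  have hcε : c * ((1 - c) * δ / c) = (1 - c) * δ := by field_simp
  nlinarith [hfδ x]

theorem tendstoUniformly_of_mul_le_of_le_mul {b c : ι → ℝ} {C : ℝ} (hf₀ : ∀ x, 0 ≤ f x)
    (hfC : ∀ x, f x ≤ C) (hb : Tendsto b l (𝓝 1)) (hc : Tendsto c l (𝓝 1))
    (hbF : ∀ i x, b i * f x ≤ F i x) (hFc : ∀ i x, F i x ≤ c i * f x) :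
    TendstoUniformly F f l := by
  rw [Metric.tendstoUniformly_iff]
  intro ε hε
  have hlim : Tendsto (fun i => (|b i - 1| + |c i - 1|) * C) l (𝓝 0) := by
    simpa using ((hb.sub_const 1).abs.add (hc.sub_const 1).abs).mul_const C
  filter_upwards [hlim.eventually (gt_mem_nhds hε)] with i hi x
  have hbf := mul_le_mul_of_nonneg_right (neg_abs_le (b i - 1)) (hf₀ x)
  have hcf := mul_le_mul_of_nonneg_right (le_abs_self (c i - 1)) (hf₀ x)
  have hbf₀ := mul_nonneg (abs_nonneg (b i - 1)) (hf₀ x)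
  have hcf₀ := mul_nonneg (abs_nonneg (c i - 1)) (hf₀ x)
  rw [dist_comm, Real.dist_eq]
  calc |F i x - f x| ≤ (|b i - 1| + |c i - 1|) * f x := by
        rw [abs_sub_le_iff]; constructor <;> linarith [hbF i x, hFc i x]
    _ ≤ (|b i - 1| + |c i - 1|) * C := by gcongr; exact hfC x
    _ < ε := hi

variable [TopologicalSpace K] [CompactSpace K] [Nonempty K]

theorem TendstoUniformly.tendsto_birkhoffAlpha (hu : TendstoUniformly F f l)
    (hF : ∀ i, Continuous (F i)) (hf : Continuous f) (pF : ∀ i x, 0 < F i x)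
    (pf : ∀ x, 0 < f x) :
    Tendsto (fun i => birkhoffAlpha (F i) f) l (𝓝 1) ∧
      Tendsto (fun i => birkhoffAlpha f (F i)) l (𝓝 1) := by
  obtain ⟨xm, -, hxm⟩ := isCompact_univ.exists_isMinOn Set.univ_nonempty hf.continuousOn
  have hδ : ∀ x, f xm ≤ f x := fun x => hxm (Set.mem_univ x)
  have hFxm := hu.tendsto_at xm
  have hr₁ : Tendsto (fun i => f xm / F i xm) l (𝓝 1) := by
    simpa [Pi.div_def, div_self (pf xm).ne'] using
      (tendsto_const_nhds (x := f xm)).div hFxm (pf xm).ne'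
  have hr₂ : Tendsto (fun i => F i xm / f xm) l (𝓝 1) := by
    simpa [div_self (pf xm).ne'] using hFxm.div_const (f xm)
  refine ⟨tendsto_order.2 ⟨fun c hc => ?_, fun C hC => ?_⟩,
    tendsto_order.2 ⟨fun c hc => ?_, fun C hC => ?_⟩⟩
  · rcases le_or_gt c 0 with hc₀ | hc₀
    · exact Eventually.of_forall fun i => hc₀.trans_lt (birkhoffAlpha_pos (hF i) hf (pF i) pf)
    · filter_upwards [hu.eventually_mul_lt_limit (pf xm) hδ hc₀ hc] with i hi
      exact lt_birkhoffAlpha_of_forall_mul_lt (hF i) hf (pF i) pf hi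
  · filter_upwards [hr₁.eventually (gt_mem_nhds hC)] with i hi
    exact (birkhoffAlpha_le_div (pF i xm) (pf xm).le).trans_lt hi
  · filter_upwards [hu.eventually_mul_limit_lt (pf xm) hδ hc] with i hi
    exact lt_birkhoffAlpha_of_forall_mul_lt hf (hF i) pf (pF i) hi
  · filter_upwards [hr₂.eventually (gt_mem_nhds hC)] with i hi
    exact (birkhoffAlpha_le_div (pf xm) (pF i xm).le).trans_lt hi

theorem tendstoUniformly_of_tendsto_birkhoffAlpha (hF : ∀ i, Continuous (F i))
    (hf : Continuous f) (pF : ∀ i x, 0 < F i x) (pf : ∀ x, 0 < f x)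
    (ha : Tendsto (fun i => birkhoffAlpha (F i) f) l (𝓝 1))
    (hb : Tendsto (fun i => birkhoffAlpha f (F i)) l (𝓝 1)) :
    TendstoUniformly F f l := by
  obtain ⟨xM, -, hxM⟩ := isCompact_univ.exists_isMaxOn Set.univ_nonempty hf.continuousOn
  refine tendstoUniformly_of_mul_le_of_le_mul (fun x => (pf x).le) (fun x => hxM (Set.mem_univ x))
    hb (by simpa using ha.inv₀ one_ne_zero)
    (fun i x => birkhoffAlpha_mul_le (pf x) (pF i x).le) fun i x => ?_
  exact (le_inv_mul_iff₀ (birkhoffAlpha_pos (hF i) hf (pF i) pf)).2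
    (birkhoffAlpha_mul_le (pF i x) (pf x).le)

theorem tendstoUniformly_iff_tendsto_birkhoffAlpha (hF : ∀ i, Continuous (F i))
    (hf : Continuous f) (pF : ∀ i x, 0 < F i x) (pf : ∀ x, 0 < f x) :
    TendstoUniformly F f l ↔ Tendsto (fun i => birkhoffAlpha (F i) f) l (𝓝 1) ∧
      Tendsto (fun i => birkhoffAlpha f (F i)) l (𝓝 1) :=
  ⟨fun hu => hu.tendsto_birkhoffAlpha hF hf pF pf,
    fun ⟨ha, hb⟩ => tendstoUniformly_of_tendsto_birkhoffAlpha hF hf pF pf ha hb⟩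

end Limits

theorem stmt2_general (K : Type*) [MetricSpace K] [CompactSpace K] [Nonempty K]
    [MeasurableSpace K]
    (μ : Measure K)
    (v : K → ℝ) (vn : ℕ → K → ℝ)
    (hvc : Continuous v) (hvnc : ∀ n, Continuous (vn n))
    (hvp : ∀ x, 0 < v x) (hvnp : ∀ n x, 0 < vn n x)
    (hv1 : ∫ x, v x ∂μ = 1) (hvn1 : ∀ n, ∫ x, vn n x ∂μ = 1) :
    Tendsto (fun n => birkhoffTheta (vn n) v) atTop (nhds 0) ↔
      TendstoUniformly vn v atTop := by
  have hα₁ n := birkhoffAlpha_pos (hvnc n) hvc (hvnp n) hvp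
  have hα₂ n := birkhoffAlpha_pos hvc (hvnc n) hvp (hvnp n)
  rw [tendstoUniformly_iff_tendsto_birkhoffAlpha hvnc hvc hvnp hvp,
    ← tendsto_mul_nhds_one_iff_of_le_one (fun n => (hα₁ n).le) (fun n => (hα₂ n).le)
      (fun n => birkhoffAlpha_le_one (hvnp n) (fun x => (hvp x).le) (hvn1 n) hv1)
      (fun n => birkhoffAlpha_le_one hvp (fun x => (hvnp n x).le) hv1 (hvn1 n)),
    ← tendsto_neg_log_nhds_zero_iff fun n => mul_pos (hα₁ n) (hα₂ n)]
  rfl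

/-- on normalized positive continuous densities, convergence in the
Birkhoff–Hilbert projective distance is equivalent to uniform convergence. -/
theorem stmt2 (K : Type*) [MetricSpace K] [CompactSpace K] [Nonempty K]
    [MeasurableSpace K] [BorelSpace K]
    (μ : Measure K) [IsProbabilityMeasure μ]
    (v : K → ℝ) (vn : ℕ → K → ℝ)
    (hvc : Continuous v) (hvnc : ∀ n, Continuous (vn n))
    (hvp : ∀ x, 0 < v x) (hvnp : ∀ n x, 0 < vn n x)
    (hv1 : ∫ x, v x ∂μ = 1) (hvn1 : ∀ n, ∫ x, vn n x ∂μ = 1) :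
    Tendsto (fun n => birkhoffTheta (vn n) v) atTop (nhds 0) ↔
      TendstoUniformly vn v atTop :=
  stmt2_general K μ v vn hvc hvnc hvp hvnp hv1 hvn1
end

section
/- Let p ≥ 1, β > 0, A ∈ ℝ, c ∈ ℝ^p, and let P : ℝ × ℝ^p → ℝ. Suppose u : ℝ × ℝ^p → ℝ is differentiable in t and twice differentiable in x and satisfies, for all (t,x), (1/(2β))·Δu(t,x) + ∂ₜu(t,x) − ( (1/2)·‖c − ∇u(t,x)‖² + P(t,x) ) + A = 0. Define v(t,x) = exp(−β·u(t,x)). Then for all (t,x): ∂ₜv(t,x) + exp(−β·⟨c,x⟩) · ( (1/(2β)) · Δ_x( y ↦ exp(β·⟨c,y⟩)·v(t,y) )(x) + β·(P(t,x) − A)·exp(β·⟨c,x⟩)·v(t,x) ) = 0. -/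
open scoped RealInnerProductSpace

/-- The spatial Laplacian of `f : ℝ^p → ℝ`: the sum of the second derivatives in the
directions of the standard orthonormal basis (the trace of the Hessian). -/
noncomputable def laplacian {p : ℕ} (f : EuclideanSpace ℝ (Fin p) → ℝ)
    (x : EuclideanSpace ℝ (Fin p)) : ℝ :=
  ∑ i : Fin p,
    fderiv ℝ (fun y => fderiv ℝ f y (EuclideanSpace.single i 1)) x (EuclideanSpace.single i 1)

/-! With `h = ⟪c, ·⟫ - u`, the twisted function `exp (β ⟪c, ·⟫) v` is `exp (β h)`, and the chain
rule for the Laplacian gives `Δ exp (β h) = β exp (β h) (β ‖∇h‖² + Δh)` with `∇h = c - ∇u` and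
`Δh = -Δu`. Multiplying by `exp (-β ⟪c, x⟫)` turns `exp (β h)` back into `v`, and since
`∂ₜv = -β v ∂ₜu`, the left-hand side of the claim is `-β v` times the left-hand side of the
PDE for `u`. -/

open Finset

theorem fderiv_fderiv_apply_comp {E : Type*} [NormedAddCommGroup E] [NormedSpace ℝ E]
    {φ φ' : ℝ → ℝ} {φ'' : ℝ} {h : E → ℝ} {x : E} (e : E)
    (hφ : ∀ s, HasDerivAt φ (φ' s) s) (hφ' : HasDerivAt φ' φ'' (h x))
    (hh : Differentiable ℝ h) (hh2 : DifferentiableAt ℝ (fderiv ℝ h) x) :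
    fderiv ℝ (fun y => fderiv ℝ (fun y => φ (h y)) y e) x e =
      φ'' * fderiv ℝ h x e ^ 2 + φ' (h x) * fderiv ℝ (fun y => fderiv ℝ h y e) x e := by
  have hD : (fun y => fderiv ℝ (fun y => φ (h y)) y e) = fun y => φ' (h y) * fderiv ℝ h y e :=
    funext fun y => by
      have hcomp : HasFDerivAt (fun y => φ (h y)) (φ' (h y) • fderiv ℝ h y) y :=
        (hφ (h y)).comp_hasFDerivAt y (hh y).hasFDerivAt
      rw [hcomp.fderiv]
      rfl
  have hdir : HasFDerivAt (fun y => fderiv ℝ h y e) (fderiv ℝ (fun y => fderiv ℝ h y e) x) x :=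
    (hh2.clm_apply (differentiableAt_const e)).hasFDerivAt
  have hφ'h : HasFDerivAt (fun y => φ' (h y)) (φ'' • fderiv ℝ h x) x :=
    hφ'.comp_hasFDerivAt x (hh x).hasFDerivAt
  rw [hD, (hφ'h.fun_mul hdir).fderiv]
  simp only [add_apply, smul_apply, smul_eq_mul]
  ring

section Euclidean

variable {p : ℕ}

theorem sum_sq_fderiv_single (f : EuclideanSpace ℝ (Fin p) → ℝ) (x : EuclideanSpace ℝ (Fin p)) :
    ∑ i : Fin p, fderiv ℝ f x (EuclideanSpace.single i 1) ^ 2 = ‖gradient f x‖ ^ 2 := by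
  simp only [← inner_gradient_left, EuclideanSpace.inner_single_right]
  simp [EuclideanSpace.norm_sq_eq]

theorem laplacian_comp {φ φ' : ℝ → ℝ} {φ'' : ℝ} {h : EuclideanSpace ℝ (Fin p) → ℝ}
    {x : EuclideanSpace ℝ (Fin p)}
    (hφ : ∀ s, HasDerivAt φ (φ' s) s) (hφ' : HasDerivAt φ' φ'' (h x))
    (hh : Differentiable ℝ h) (hh2 : DifferentiableAt ℝ (fderiv ℝ h) x) :
    laplacian (fun y => φ (h y)) x = φ'' * ‖gradient h x‖ ^ 2 + φ' (h x) * laplacian h x := by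
  simp only [laplacian, fderiv_fderiv_apply_comp _ hφ hφ' hh hh2, sum_add_distrib, ← mul_sum,
    sum_sq_fderiv_single]

theorem laplacian_exp_const_mul (β : ℝ) {h : EuclideanSpace ℝ (Fin p) → ℝ}
    {x : EuclideanSpace ℝ (Fin p)}
    (hh : Differentiable ℝ h) (hh2 : DifferentiableAt ℝ (fderiv ℝ h) x) :
    laplacian (fun y => Real.exp (β * h y)) x =
      β * Real.exp (β * h x) * (β * ‖gradient h x‖ ^ 2 + laplacian h x) := by
  have hexp : ∀ s, HasDerivAt (fun s => Real.exp (β * s)) (β * Real.exp (β * s)) s := fun s => by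
    simpa [mul_comm] using ((hasDerivAt_id s).const_mul β).exp
  rw [laplacian_comp hexp ((hexp (h x)).const_mul β) hh hh2]
  ring

theorem HasFDerivAt.inner_sub (c : EuclideanSpace ℝ (Fin p)) {f : EuclideanSpace ℝ (Fin p) → ℝ}
    {f' : StrongDual ℝ (EuclideanSpace ℝ (Fin p))} {x : EuclideanSpace ℝ (Fin p)}
    (hf : HasFDerivAt f f' x) :
    HasFDerivAt (fun y => ⟪c, y⟫ - f y) (innerSL ℝ c - f') x :=
  (innerSL ℝ c).hasFDerivAt.fun_sub hf

theorem fderiv_inner_sub (c : EuclideanSpace ℝ (Fin p)) {f : EuclideanSpace ℝ (Fin p) → ℝ}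
    (hf : Differentiable ℝ f) :
    fderiv ℝ (fun y => ⟪c, y⟫ - f y) = fun y => innerSL ℝ c - fderiv ℝ f y :=
  funext fun y => ((hf y).hasFDerivAt.inner_sub c).fderiv

theorem laplacian_inner_sub (c : EuclideanSpace ℝ (Fin p)) {f : EuclideanSpace ℝ (Fin p) → ℝ}
    (hf : Differentiable ℝ f) (x : EuclideanSpace ℝ (Fin p)) :
    laplacian (fun y => ⟪c, y⟫ - f y) x = -laplacian f x := by
  simp only [laplacian, fderiv_inner_sub c hf, sub_apply, fderiv_const_sub, neg_apply,
    sum_neg_distrib]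

theorem gradient_inner_sub (c : EuclideanSpace ℝ (Fin p)) {f : EuclideanSpace ℝ (Fin p) → ℝ}
    {x : EuclideanSpace ℝ (Fin p)} (hf : DifferentiableAt ℝ f x) :
    gradient (fun y => ⟪c, y⟫ - f y) x = c - gradient f x := by
  refine HasGradientAt.gradient ?_
  rw [hasGradientAt_iff_hasFDerivAt, map_sub, toDual_gradient]
  exact hf.hasFDerivAt.inner_sub c

theorem laplacian_exp_inner_sub (β : ℝ) (c : EuclideanSpace ℝ (Fin p))
    {f : EuclideanSpace ℝ (Fin p) → ℝ} {x : EuclideanSpace ℝ (Fin p)}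
    (hf : Differentiable ℝ f) (hf2 : DifferentiableAt ℝ (fderiv ℝ f) x) :
    laplacian (fun y => Real.exp (β * (⟪c, y⟫ - f y))) x =
      β * Real.exp (β * (⟪c, x⟫ - f x)) * (β * ‖c - gradient f x‖ ^ 2 - laplacian f x) := by
  have hdiff : Differentiable ℝ fun y => ⟪c, y⟫ - f y :=
    fun y => ((hf y).hasFDerivAt.inner_sub c).differentiableAt
  have hdiff2 : DifferentiableAt ℝ (fderiv ℝ fun y => ⟪c, y⟫ - f y) x := by
    rw [fderiv_inner_sub c hf]
    exact hf2.const_sub _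
  rw [laplacian_exp_const_mul β hdiff hdiff2, laplacian_inner_sub c hf,
    gradient_inner_sub c (hf x), ← sub_eq_add_neg]

end Euclidean

theorem stmt3_general (p : ℕ) (β : ℝ) (A : ℝ)
    (c : EuclideanSpace ℝ (Fin p)) (P : ℝ → EuclideanSpace ℝ (Fin p) → ℝ)
    (u : ℝ → EuclideanSpace ℝ (Fin p) → ℝ)
    (hut : ∀ x, Differentiable ℝ fun t => u t x)
    (hux : ∀ t, Differentiable ℝ (u t))
    (hux2 : ∀ t, Differentiable ℝ fun x => fderiv ℝ (u t) x)
    (hpde : ∀ t x, (1 / (2 * β)) * laplacian (u t) x + deriv (fun s => u s x) t -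
      ((1 / 2) * ‖c - gradient (u t) x‖ ^ 2 + P t x) + A = 0)
    (v : ℝ → EuclideanSpace ℝ (Fin p) → ℝ)
    (hv : ∀ t x, v t x = Real.exp (-β * u t x)) :
    ∀ t x, deriv (fun s => v s x) t + Real.exp (-β * ⟪c, x⟫) *
      ((1 / (2 * β)) * laplacian (fun y => Real.exp (β * ⟪c, y⟫) * v t y) x +
        β * (P t x - A) * Real.exp (β * ⟪c, x⟫) * v t x) = 0 := by
  intro t x
  obtain rfl : v = fun s y => Real.exp (-β * u s y) := funext₂ hv
  have htime : deriv (fun s => Real.exp (-β * u s x)) t =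
      Real.exp (-β * u t x) * (-β * deriv (fun s => u s x) t) :=
    ((hut x t).hasDerivAt.const_mul (-β)).exp.deriv
  have htwist : (fun y => Real.exp (β * ⟪c, y⟫) * Real.exp (-β * u t y)) =
      fun y => Real.exp (β * (⟪c, y⟫ - u t y)) :=
    funext fun y => by rw [← Real.exp_add]; ring_nf
  have hcancel : Real.exp (-β * ⟪c, x⟫) * Real.exp (β * ⟪c, x⟫) = 1 := by
    rw [← Real.exp_add]; simp
  have huntwist : Real.exp (-β * ⟪c, x⟫) * Real.exp (β * (⟪c, x⟫ - u t x)) =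
      Real.exp (-β * u t x) := by
    rw [← Real.exp_add]; ring_nf
  rw [htime, htwist, laplacian_exp_inner_sub β c (hux t) (hux2 t x)]
  -- `1 / (2 * β) * β ^ 2 = β / 2` comes from `β * β * β⁻¹ = β`, which holds also at `β = 0`.
  linear_combination (-β * Real.exp (-β * u t x)) * hpde t x
    + (β * (P t x - A) * Real.exp (-β * u t x)) * hcancel
    + (1 / (2 * β) * β * (β * ‖c - gradient (u t) x‖ ^ 2 - laplacian (u t) x)) * huntwist
    + (Real.exp (-β * u t x) * ‖c - gradient (u t) x‖ ^ 2 / 2) * mul_self_mul_inv β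

/-- if `u` solves the viscous Hamilton–Jacobi equation, then
`v = exp(−βu)` solves the twisted Schrödinger equation. -/
theorem stmt3 (p : ℕ) (hp : 1 ≤ p) (β : ℝ) (hβ : 0 < β) (A : ℝ)
    (c : EuclideanSpace ℝ (Fin p)) (P : ℝ → EuclideanSpace ℝ (Fin p) → ℝ)
    (u : ℝ → EuclideanSpace ℝ (Fin p) → ℝ)
    (hut : ∀ x, Differentiable ℝ fun t => u t x)
    (hux : ∀ t, Differentiable ℝ (u t))
    (hux2 : ∀ t, Differentiable ℝ fun x => fderiv ℝ (u t) x)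
    (hpde : ∀ t x, (1 / (2 * β)) * laplacian (u t) x + deriv (fun s => u s x) t -
      ((1 / 2) * ‖c - gradient (u t) x‖ ^ 2 + P t x) + A = 0)
    (v : ℝ → EuclideanSpace ℝ (Fin p) → ℝ)
    (hv : ∀ t x, v t x = Real.exp (-β * u t x)) :
    ∀ t x, deriv (fun s => v s x) t + Real.exp (-β * ⟪c, x⟫) *
      ((1 / (2 * β)) * laplacian (fun y => Real.exp (β * ⟪c, y⟫) * v t y) x +
        β * (P t x - A) * Real.exp (β * ⟪c, x⟫) * v t x) = 0 :=
  stmt3_general p β A c P u hut hux hux2 hpde v hv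
end

section
/- There exist constants C₅ and C₇ with 0 < C₅ ≤ C₇, depending only on p, β, c and M (and not on G or v), such that for every G as in the context and every continuous, strictly positive, ℤ^p-periodic, normalized function v : ℝ^p → ℝ one has C₅ ≤ (L v)(x) ≤ C₇ for all x ∈ ℝ^p; in particular sup (L v) / inf (L v) ≤ C₇ / C₅. -/
open MeasureTheory
open scoped RealInnerProductSpace

/-- The unit cube `[0,1]^p` in `ℝ^p`. -/
def unitCube (p : ℕ) : Set (EuclideanSpace ℝ (Fin p)) :=
  {x | ∀ i, x i ∈ Set.Icc (0 : ℝ) 1}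

/-- The twisted Gaussian kernel operator
`(L v)(x) = (β/(2π))^(p/2) ∫ exp(−(β/2)‖y−x‖²) exp(β⟨c,y−x⟩) G(x,y) v(y) dy`. -/
noncomputable def twistedKernelOp (p : ℕ) (β : ℝ) (c : EuclideanSpace ℝ (Fin p))
    (G : EuclideanSpace ℝ (Fin p) → EuclideanSpace ℝ (Fin p) → ℝ)
    (v : EuclideanSpace ℝ (Fin p) → ℝ) (x : EuclideanSpace ℝ (Fin p)) : ℝ :=
  (β / (2 * Real.pi)) ^ ((p : ℝ) / 2) *
    ∫ y, Real.exp (-(β / 2) * ‖y - x‖ ^ 2) * Real.exp (β * ⟪c, y - x⟫) * G x y * v y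

/-!
Completing the square turns the kernel into `exp (β ‖c‖² / 2)` times a Gaussian centred at
`x + c`, and `G` only contributes factors between `exp (-M)` and `exp M`. Tile `ℝ^p` by the
half-open unit cells `{y | ⌊y⌋ = k}`: by periodicity `v` has mass one on each of them, and on a
cell, whose squared diameter is at most `p`, the Gaussian varies at most by the factor
`exp (β p / 2)` once its rate is halved. The cell containing the centre gives the lower bound;
summing over all cells and comparing with the integral of the wider Gaussian gives the upper one.
-/

open scoped ENNReal
open Set

lemma exp_neg_sq_norm_sub_le {V : Type*} [SeminormedAddCommGroup V] {β r : ℝ} (hβ : 0 ≤ β)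
    {y z : V} (hyz : ‖y - z‖ ^ 2 ≤ r) (a : V) :
    Real.exp (-(β / 2) * ‖y - a‖ ^ 2)
      ≤ Real.exp (β * r / 2) * Real.exp (-(β / 4) * ‖z - a‖ ^ 2) := by
  rw [← Real.exp_add, Real.exp_le_exp]
  have htri : ‖z - a‖ ≤ ‖y - z‖ + ‖y - a‖ := by
    simpa [norm_sub_rev y z] using norm_sub_le_norm_sub_add_norm_sub z y a
  have hsq : ‖z - a‖ ^ 2 ≤ 2 * ‖y - z‖ ^ 2 + 2 * ‖y - a‖ ^ 2 := by
    nlinarith [norm_nonneg (z - a), sq_nonneg (‖y - z‖ - ‖y - a‖)]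
  nlinarith

lemma exp_neg_sq_norm_mul_exp_inner {V : Type*} [NormedAddCommGroup V] [InnerProductSpace ℝ V]
    (β : ℝ) (c u : V) :
    Real.exp (-(β / 2) * ‖u‖ ^ 2) * Real.exp (β * ⟪c, u⟫)
      = Real.exp (β * ‖c‖ ^ 2 / 2) * Real.exp (-(β / 2) * ‖u - c‖ ^ 2) := by
  rw [← Real.exp_add, ← Real.exp_add, norm_sub_sq_real, real_inner_comm]
  ring_nf

lemma lintegral_ofReal_exp_neg_mul_sq_norm_sub {V : Type*} [NormedAddCommGroup V]
    [InnerProductSpace ℝ V] [FiniteDimensional ℝ V] [MeasurableSpace V] [BorelSpace V]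
    {b : ℝ} (hb : 0 < b) (a : V) :
    ∫⁻ y, ENNReal.ofReal (Real.exp (-b * ‖y - a‖ ^ 2))
      = ENNReal.ofReal ((Real.pi / b) ^ (Module.finrank ℝ V / 2 : ℝ)) := by
  have hval := GaussianFourier.integral_rexp_neg_mul_sq_norm (V := V) hb
  have hint : Integrable fun y : V => Real.exp (-b * ‖y‖ ^ 2) :=
    .of_integral_ne_zero (hval ▸ (Real.rpow_pos_of_pos (by positivity) _).ne')
  rw [lintegral_sub_right_eq_self (fun y => ENNReal.ofReal (Real.exp (-b * ‖y‖ ^ 2))) a,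
    ← ofReal_integral_eq_lintegral_ofReal hint (.of_forall fun _ => (Real.exp_pos _).le), hval]

lemma sSup_range_div_sInf_range_le {ι : Type*} [Nonempty ι] {f : ι → ℝ} {a b : ℝ}
    (ha : 0 < a) (hf : ∀ i, f i ∈ Icc a b) : sSup (range f) / sInf (range f) ≤ b / a := by
  obtain ⟨i⟩ := ‹Nonempty ι›
  exact div_le_div₀ (ha.le.trans ((hf i).1.trans (hf i).2))
    (csSup_le (range_nonempty f) (forall_mem_range.2 fun i => (hf i).2)) ha
    (le_csInf (range_nonempty f) (forall_mem_range.2 fun i => (hf i).1))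

namespace TwistedKernel

variable {p : ℕ}

def latticeCell (p : ℕ) (k : Fin p → ℤ) : Set (EuclideanSpace ℝ (Fin p)) :=
  {y | ∀ i, ⌊y i⌋ = k i}

lemma mem_latticeCell_floor (a : EuclideanSpace ℝ (Fin p)) :
    a ∈ latticeCell p (fun i => ⌊a i⌋) := fun _ => rfl

lemma latticeCell_eq_preimage (k : Fin p → ℤ) :
    latticeCell p k = WithLp.ofLp ⁻¹' univ.pi fun i => Ico (k i : ℝ) (k i + 1) := by
  ext y
  simp [latticeCell, Int.floor_eq_iff]

lemma measurableSet_latticeCell (k : Fin p → ℤ) : MeasurableSet (latticeCell p k) := by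
  rw [latticeCell_eq_preimage]
  exact (MeasurableSet.univ_pi fun _ => measurableSet_Ico).preimage
    (PiLp.volume_preserving_ofLp _).measurable

lemma volume_latticeCell (k : Fin p → ℤ) : volume (latticeCell p k) = 1 := by
  rw [latticeCell_eq_preimage, (PiLp.volume_preserving_ofLp _).measure_preimage
    (MeasurableSet.univ_pi fun _ => measurableSet_Ico).nullMeasurableSet, volume_pi_pi]
  simp

lemma latticeCell_zero_ae_eq_unitCube : latticeCell p 0 =ᵐ[volume] unitCube p := by
  have h := (PiLp.volume_preserving_ofLp (Fin p)).quasiMeasurePreserving.preimage_ae_eq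
    (Measure.univ_pi_Ico_ae_eq_Icc (μ := fun _ => volume) (f := 0) (g := 1))
  have hcell : latticeCell p 0 =
      WithLp.ofLp ⁻¹' univ.pi fun i => Ico ((0 : Fin p → ℝ) i) ((1 : Fin p → ℝ) i) := by
    ext y; simp [latticeCell, Int.floor_eq_iff]
  have hcube : unitCube p = WithLp.ofLp ⁻¹' Icc 0 1 := by
    ext y; simp [unitCube, Pi.le_def, forall_and]
  rwa [hcell, hcube]

lemma lintegral_eq_tsum_latticeCell (f : EuclideanSpace ℝ (Fin p) → ℝ≥0∞) :
    ∫⁻ y, f y = ∑' k, ∫⁻ y in latticeCell p k, f y := by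
  have hfiber : latticeCell p =
      fun k => (fun (y : EuclideanSpace ℝ (Fin p)) i => ⌊y i⌋) ⁻¹' {k} := by
    ext k y; simp [latticeCell, funext_iff]
  rw [← lintegral_iUnion measurableSet_latticeCell, ← setLIntegral_univ]
  · congr
    exact (eq_univ_of_forall fun y => mem_iUnion.2 ⟨_, mem_latticeCell_floor y⟩).symm
  · rw [hfiber]; exact pairwise_disjoint_fiber _

lemma norm_sub_sq_le_of_mem_latticeCell {k : Fin p → ℤ} {y z : EuclideanSpace ℝ (Fin p)}
    (hy : y ∈ latticeCell p k) (hz : z ∈ latticeCell p k) : ‖y - z‖ ^ 2 ≤ p := by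
  rw [EuclideanSpace.norm_sq_eq]
  calc ∑ i, ‖(y - z) i‖ ^ 2 ≤ ∑ _i : Fin p, (1 : ℝ) := by
        gcongr with i
        have hyi := Int.floor_eq_iff.mp (hy i)
        have hzi := Int.floor_eq_iff.mp (hz i)
        rw [Real.norm_eq_abs, sq_abs, PiLp.sub_apply]
        nlinarith
    _ = p := by simp

lemma setLIntegral_latticeCell_of_periodic {f : EuclideanSpace ℝ (Fin p) → ℝ≥0∞}
    (hf : ∀ x (k : Fin p → ℤ), f (x + intVec p k) = f x) (k : Fin p → ℤ) :
    ∫⁻ y in latticeCell p k, f y = ∫⁻ y in unitCube p, f y := by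
  have hshift := (measurePreserving_add_right volume (intVec p k)).setLIntegral_comp_preimage_emb
    (MeasurableEquiv.addRight (intVec p k)).measurableEmbedding f (latticeCell p k)
  have hpre : (· + intVec p k) ⁻¹' latticeCell p k = latticeCell p 0 := by
    ext y
    simp only [mem_preimage, latticeCell, mem_ofPred_eq, PiLp.add_apply, intVec,
      Int.floor_add_intCast, add_eq_right, Pi.zero_apply]
  rw [← hshift, hpre, setLIntegral_congr latticeCell_zero_ae_eq_unitCube]
  simp only [hf]

lemma lintegral_mul_le_of_le_on_latticeCell {g h f : EuclideanSpace ℝ (Fin p) → ℝ≥0∞}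
    {C m : ℝ≥0∞} (hh : Measurable h) (hf : Measurable f)
    (hgh : ∀ k, ∀ y ∈ latticeCell p k, ∀ z ∈ latticeCell p k, g y ≤ C * h z)
    (hfm : ∀ k, ∫⁻ y in latticeCell p k, f y ≤ m) :
    ∫⁻ y, g y * f y ≤ C * m * ∫⁻ y, h y := by
  rw [lintegral_eq_tsum_latticeCell, lintegral_eq_tsum_latticeCell, ← ENNReal.tsum_mul_left]
  refine ENNReal.tsum_le_tsum fun k => ?_
  have hg : ∀ y ∈ latticeCell p k, g y ≤ C * ∫⁻ z in latticeCell p k, h z := by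
    intro y hy
    calc g y = ∫⁻ _ in latticeCell p k, g y := by
          rw [setLIntegral_const, volume_latticeCell, mul_one]
      _ ≤ ∫⁻ z in latticeCell p k, C * h z :=
          setLIntegral_mono' (measurableSet_latticeCell k) (hgh k y hy)
      _ = C * ∫⁻ z in latticeCell p k, h z := lintegral_const_mul C hh
  calc ∫⁻ y in latticeCell p k, g y * f y
      ≤ ∫⁻ y in latticeCell p k, (C * ∫⁻ z in latticeCell p k, h z) * f y :=
        setLIntegral_mono' (measurableSet_latticeCell k) fun y hy => by gcongr; exact hg y hy
    _ = (C * ∫⁻ z in latticeCell p k, h z) * ∫⁻ y in latticeCell p k, f y :=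
        lintegral_const_mul _ hf
    _ ≤ (C * ∫⁻ z in latticeCell p k, h z) * m := by gcongr; exact hfm k
    _ = C * m * ∫⁻ z in latticeCell p k, h z := by ring

lemma lintegral_gaussian_mul_le {β : ℝ} (hβ : 0 < β)
    {f : EuclideanSpace ℝ (Fin p) → ℝ≥0∞} (hf : Measurable f) {m : ℝ≥0∞}
    (hfm : ∀ k, ∫⁻ y in latticeCell p k, f y ≤ m)
    (a : EuclideanSpace ℝ (Fin p)) :
    ∫⁻ y, ENNReal.ofReal (Real.exp (-(β / 2) * ‖y - a‖ ^ 2)) * f y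
      ≤ ENNReal.ofReal (Real.exp (β * p / 2)) * m
        * ENNReal.ofReal ((Real.pi / (β / 4)) ^ ((p : ℝ) / 2)) := by
  have h := lintegral_mul_le_of_le_on_latticeCell
    (h := fun z => ENNReal.ofReal (Real.exp (-(β / 4) * ‖z - a‖ ^ 2))) (by fun_prop) hf
    (fun k y hy z hz => by
      rw [← ENNReal.ofReal_mul (Real.exp_pos _).le]
      exact ENNReal.ofReal_le_ofReal
        (exp_neg_sq_norm_sub_le hβ.le (norm_sub_sq_le_of_mem_latticeCell hy hz) a)) hfm
  rwa [lintegral_ofReal_exp_neg_mul_sq_norm_sub (by positivity), finrank_euclideanSpace_fin] at h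

lemma le_lintegral_gaussian_mul {β : ℝ} (hβ : 0 ≤ β)
    {f : EuclideanSpace ℝ (Fin p) → ℝ≥0∞} {m : ℝ≥0∞}
    (hfm : ∀ k, m ≤ ∫⁻ y in latticeCell p k, f y) (a : EuclideanSpace ℝ (Fin p)) :
    ENNReal.ofReal (Real.exp (-(β * p / 2))) * m
      ≤ ∫⁻ y, ENNReal.ofReal (Real.exp (-(β / 2) * ‖y - a‖ ^ 2)) * f y := by
  set k : Fin p → ℤ := fun i => ⌊a i⌋
  calc ENNReal.ofReal (Real.exp (-(β * p / 2))) * m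
      ≤ ENNReal.ofReal (Real.exp (-(β * p / 2))) * ∫⁻ y in latticeCell p k, f y := by
        gcongr; exact hfm k
    _ = ∫⁻ y in latticeCell p k, ENNReal.ofReal (Real.exp (-(β * p / 2))) * f y :=
        (lintegral_const_mul' _ _ ENNReal.ofReal_ne_top).symm
    _ ≤ ∫⁻ y in latticeCell p k,
          ENNReal.ofReal (Real.exp (-(β / 2) * ‖y - a‖ ^ 2)) * f y :=
        setLIntegral_mono' (measurableSet_latticeCell k) fun y hy => by
          have hya := norm_sub_sq_le_of_mem_latticeCell hy (mem_latticeCell_floor a)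
          gcongr
          nlinarith
    _ ≤ _ := setLIntegral_le_lintegral _ _

lemma integral_gaussian_mul_mem_Icc {β : ℝ} (hβ : 0 < β)
    {w : EuclideanSpace ℝ (Fin p) → ℝ} (hw : Measurable w) (hw0 : ∀ y, 0 ≤ w y)
    {m m' : ℝ} (hm' : 0 ≤ m')
    (hlo : ∀ k, ENNReal.ofReal m ≤ ∫⁻ y in latticeCell p k, ENNReal.ofReal (w y))
    (hhi : ∀ k, ∫⁻ y in latticeCell p k, ENNReal.ofReal (w y) ≤ ENNReal.ofReal m')
    (a : EuclideanSpace ℝ (Fin p)) :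
    ∫ y, Real.exp (-(β / 2) * ‖y - a‖ ^ 2) * w y
      ∈ Icc (Real.exp (-(β * p / 2)) * m)
        (Real.exp (β * p / 2) * m' * (Real.pi / (β / 4)) ^ ((p : ℝ) / 2)) := by
  have hsplit : ∀ y, ENNReal.ofReal (Real.exp (-(β / 2) * ‖y - a‖ ^ 2) * w y)
      = ENNReal.ofReal (Real.exp (-(β / 2) * ‖y - a‖ ^ 2)) * ENNReal.ofReal (w y) :=
    fun y => ENNReal.ofReal_mul (Real.exp_pos _).le
  have hupper : ∫⁻ y, ENNReal.ofReal (Real.exp (-(β / 2) * ‖y - a‖ ^ 2) * w y)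
      ≤ ENNReal.ofReal (Real.exp (β * p / 2) * m' * (Real.pi / (β / 4)) ^ ((p : ℝ) / 2)) := by
    rw [ENNReal.ofReal_mul (by positivity), ENNReal.ofReal_mul (Real.exp_pos _).le]
    simp_rw [hsplit]
    exact lintegral_gaussian_mul_le hβ hw.ennreal_ofReal hhi a
  have hlower : ENNReal.ofReal (Real.exp (-(β * p / 2)) * m)
      ≤ ∫⁻ y, ENNReal.ofReal (Real.exp (-(β / 2) * ‖y - a‖ ^ 2) * w y) := by
    rw [ENNReal.ofReal_mul (Real.exp_pos _).le]
    simp_rw [hsplit]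
    exact le_lintegral_gaussian_mul hβ.le hlo a
  rw [integral_eq_lintegral_of_nonneg_ae
    (.of_forall fun y => mul_nonneg (Real.exp_pos _).le (hw0 y)) (by fun_prop)]
  exact ⟨(ENNReal.ofReal_le_iff_le_toReal (hupper.trans_lt ENNReal.ofReal_lt_top).ne).mp hlower,
    ENNReal.toReal_le_of_le_ofReal (by positivity) hupper⟩

lemma setLIntegral_latticeCell_eq_one {v : EuclideanSpace ℝ (Fin p) → ℝ}
    (hv0 : ∀ x, 0 ≤ v x) (hper : ∀ x (k : Fin p → ℤ), v (x + intVec p k) = v x)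
    (hnorm : ∫ x in unitCube p, v x = 1) (k : Fin p → ℤ) :
    ∫⁻ y in latticeCell p k, ENNReal.ofReal (v y) = 1 := by
  rw [setLIntegral_latticeCell_of_periodic (fun x k => by rw [hper]),
    ← ofReal_integral_eq_lintegral_ofReal (.of_integral_ne_zero (hnorm ▸ one_ne_zero))
      (.of_forall hv0), hnorm, ENNReal.ofReal_one]

lemma twistedKernelOp_eq (β : ℝ) (c : EuclideanSpace ℝ (Fin p))
    (G : EuclideanSpace ℝ (Fin p) → EuclideanSpace ℝ (Fin p) → ℝ)
    (v : EuclideanSpace ℝ (Fin p) → ℝ) (x : EuclideanSpace ℝ (Fin p)) :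
    twistedKernelOp p β c G v x
      = (β / (2 * Real.pi)) ^ ((p : ℝ) / 2) * Real.exp (β * ‖c‖ ^ 2 / 2)
        * ∫ y, Real.exp (-(β / 2) * ‖y - (x + c)‖ ^ 2) * (G x y * v y) := by
  rw [twistedKernelOp, mul_assoc, ← integral_const_mul (Real.exp (β * ‖c‖ ^ 2 / 2))]
  congr 2 with y
  rw [exp_neg_sq_norm_mul_exp_inner, sub_sub]
  ring

lemma twistedKernelOp_mem_Icc {β : ℝ} (hβ : 0 < β) (c : EuclideanSpace ℝ (Fin p)) {M : ℝ}
    {G : EuclideanSpace ℝ (Fin p) → EuclideanSpace ℝ (Fin p) → ℝ}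
    (hG : Measurable (Function.uncurry G))
    (hGb : ∀ x y, Real.exp (-M) ≤ G x y ∧ G x y ≤ Real.exp M)
    {v : EuclideanSpace ℝ (Fin p) → ℝ} (hv : Measurable v) (hv0 : ∀ x, 0 ≤ v x)
    (hcell : ∀ k, ∫⁻ y in latticeCell p k, ENNReal.ofReal (v y) = 1)
    (x : EuclideanSpace ℝ (Fin p)) :
    twistedKernelOp p β c G v x ∈ Icc
      ((β / (2 * Real.pi)) ^ ((p : ℝ) / 2) * Real.exp (β * ‖c‖ ^ 2 / 2)
        * (Real.exp (-(β * p / 2)) * Real.exp (-M)))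
      ((β / (2 * Real.pi)) ^ ((p : ℝ) / 2) * Real.exp (β * ‖c‖ ^ 2 / 2)
        * (Real.exp (β * p / 2) * Real.exp M * (Real.pi / (β / 4)) ^ ((p : ℝ) / 2))) := by
  have hsplit : ∀ m y, ENNReal.ofReal (m * v y) = ENNReal.ofReal m * ENNReal.ofReal (v y) :=
    fun m y => ENNReal.ofReal_mul' (hv0 y)
  have hcell_const :
      ∀ m k, ∫⁻ y in latticeCell p k, ENNReal.ofReal (m * v y) = ENNReal.ofReal m := by
    intro m k
    simp_rw [hsplit, lintegral_const_mul _ hv.ennreal_ofReal, hcell k, mul_one]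
  have hlo : ∀ k, ENNReal.ofReal (Real.exp (-M))
      ≤ ∫⁻ y in latticeCell p k, ENNReal.ofReal (G x y * v y) := fun k =>
    hcell_const _ k ▸ setLIntegral_mono' (measurableSet_latticeCell k) fun y _ =>
      ENNReal.ofReal_le_ofReal (mul_le_mul_of_nonneg_right (hGb x y).1 (hv0 y))
  have hhi : ∀ k, ∫⁻ y in latticeCell p k, ENNReal.ofReal (G x y * v y)
      ≤ ENNReal.ofReal (Real.exp M) := fun k =>
    hcell_const _ k ▸ setLIntegral_mono' (measurableSet_latticeCell k) fun y _ =>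
      ENNReal.ofReal_le_ofReal (mul_le_mul_of_nonneg_right (hGb x y).2 (hv0 y))
  have hGv0 : ∀ y, 0 ≤ G x y * v y :=
    fun y => mul_nonneg ((Real.exp_pos _).le.trans (hGb x y).1) (hv0 y)
  obtain ⟨hlower, hupper⟩ := integral_gaussian_mul_mem_Icc hβ
    ((hG.comp measurable_prodMk_left).mul hv) hGv0 (Real.exp_pos M).le hlo hhi (x + c)
  rw [twistedKernelOp_eq]
  have hA : 0 ≤ (β / (2 * Real.pi)) ^ ((p : ℝ) / 2) * Real.exp (β * ‖c‖ ^ 2 / 2) := by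
    positivity
  exact ⟨mul_le_mul_of_nonneg_left hlower hA, mul_le_mul_of_nonneg_left hupper hA⟩

end TwistedKernel

theorem stmt5_general (p : ℕ) (β : ℝ) (hβ : 0 < β)
    (c : EuclideanSpace ℝ (Fin p)) (M : ℝ) :
    ∃ C₅ C₇ : ℝ, 0 < C₅ ∧ C₅ ≤ C₇ ∧
      ∀ G : EuclideanSpace ℝ (Fin p) → EuclideanSpace ℝ (Fin p) → ℝ,
        Measurable (Function.uncurry G) →
        (∀ x y, Real.exp (-M) ≤ G x y ∧ G x y ≤ Real.exp M) →
        (∀ x y (k : Fin p → ℤ), G (x + intVec p k) (y + intVec p k) = G x y) →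
        ∀ v : EuclideanSpace ℝ (Fin p) → ℝ, Continuous v → (∀ x, 0 < v x) →
          (∀ x (k : Fin p → ℤ), v (x + intVec p k) = v x) →
          (∫ x in unitCube p, v x) = 1 →
          (∀ x, C₅ ≤ twistedKernelOp p β c G v x ∧ twistedKernelOp p β c G v x ≤ C₇) ∧
          sSup (Set.range (twistedKernelOp p β c G v)) /
              sInf (Set.range (twistedKernelOp p β c G v)) ≤ C₇ / C₅ := by
  set A := (β / (2 * Real.pi)) ^ ((p : ℝ) / 2) * Real.exp (β * ‖c‖ ^ 2 / 2)
  set C₅ := A * (Real.exp (-(β * p / 2)) * Real.exp (-M))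
  set C₇ := A * (Real.exp (β * p / 2) * Real.exp M * (Real.pi / (β / 4)) ^ ((p : ℝ) / 2))
  have hC₅ : 0 < C₅ := by positivity
  refine ⟨C₅, max C₅ C₇, hC₅, le_max_left _ _, ?_⟩
  intro G hG hGb _ v hv hvpos hper hnorm
  have hv0 : ∀ x, 0 ≤ v x := fun x => (hvpos x).le
  have hcell := TwistedKernel.setLIntegral_latticeCell_eq_one hv0 hper hnorm
  have hL : ∀ x, twistedKernelOp p β c G v x ∈ Icc C₅ (max C₅ C₇) := fun x =>
    Icc_subset_Icc_right (le_max_right _ _) <|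
      TwistedKernel.twistedKernelOp_mem_Icc hβ c hG hGb hv.measurable hv0 hcell x
  exact ⟨hL, sSup_range_div_sInf_range_le hC₅ hL⟩

/-- uniform two-sided bounds for `L v`, for all admissible kernels `G` and
all continuous positive periodic normalized `v`. -/
theorem stmt5 (p : ℕ) (hp : 1 ≤ p) (β : ℝ) (hβ : 0 < β)
    (c : EuclideanSpace ℝ (Fin p)) (M : ℝ) (hM : 0 ≤ M) :
    ∃ C₅ C₇ : ℝ, 0 < C₅ ∧ C₅ ≤ C₇ ∧
      ∀ G : EuclideanSpace ℝ (Fin p) → EuclideanSpace ℝ (Fin p) → ℝ,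
        Measurable (Function.uncurry G) →
        (∀ x y, Real.exp (-M) ≤ G x y ∧ G x y ≤ Real.exp M) →
        (∀ x y (k : Fin p → ℤ), G (x + intVec p k) (y + intVec p k) = G x y) →
        ∀ v : EuclideanSpace ℝ (Fin p) → ℝ, Continuous v → (∀ x, 0 < v x) →
          (∀ x (k : Fin p → ℤ), v (x + intVec p k) = v x) →
          (∫ x in unitCube p, v x) = 1 →
          (∀ x, C₅ ≤ twistedKernelOp p β c G v x ∧ twistedKernelOp p β c G v x ≤ C₇) ∧
          sSup (Set.range (twistedKernelOp p β c G v)) /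
              sInf (Set.range (twistedKernelOp p β c G v)) ≤ C₇ / C₅ :=
  stmt5_general p β hβ c M
end

section
/- Let K be a nonempty compact metric space and let Λ : C(K,ℝ) → C(K,ℝ) be a map such that: (i) U ≤ V implies ΛU ≤ ΛV; (ii) Λ(U + a) = ΛU + a for every U ∈ C(K,ℝ) and every constant a ∈ ℝ; (iii) there is L ≥ 0 such that for every n ≥ 1 the function Λⁿ0 is L-Lipschitz. Then there exists exactly one λ ∈ ℝ such that for every x ∈ K the quantity liminf_{n→∞} ( (Λⁿ0)(x) + n·λ ) is a finite real number; moreover, for this λ, the function Û(x) := liminf_{n→∞} ( (Λⁿ0)(x) + n·λ ) is L-Lipschitz on K. -/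
/-!
Put `a n := (Λⁿ0)(x₀)`. Since `Λⁿ0` oscillates by at most `C := L · diam K`, monotonicity and
commutation with constants give `|a (m + n) - a m - a n| ≤ C`. By Fekete's lemma, applied to the
subadditive sequences `a + C` and `C - a`, such a sequence stays within `C` of a linear sequence
`n ↦ -n λ`; hence `(Λⁿ0)(x) + n λ` is bounded uniformly in `n` and `x`. For this `λ` the liminf is
finite and, being a liminf of `L`-Lipschitz functions, `L`-Lipschitz; for any other `λ'` the
sequence drifts linearly to `±∞`.
-/

open Filter Set ContinuousMap

theorem bddBelow_range_div_of_mul_le {u : ℕ → ℝ} {r : ℝ} (h : ∀ n : ℕ, n * r ≤ u n) :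
    BddBelow (range fun n : ℕ => u n / n) := by
  refine ⟨min 0 r, ?_⟩
  rintro _ ⟨_ | n, rfl⟩
  · simp
  · exact (min_le_right _ _).trans <| (le_div_iff₀ (by positivity)).2 (by linarith [h (n + 1)])

/-- Hyers–Ulam stability of additive sequences. -/
theorem exists_abs_sub_mul_le_of_abs_add_sub_le {a : ℕ → ℝ} {C : ℝ}
    (h : ∀ m n, |a (m + n) - a m - a n| ≤ C) : ∃ μ : ℝ, ∀ n : ℕ, |a n - n * μ| ≤ C := by
  have ha₀ : |a 0| ≤ C := by simpa [abs_neg] using h 0 0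
  have hb : Subadditive fun n => a n + C := fun m n => by linarith [(abs_le.1 (h m n)).2]
  have hc : Subadditive fun n => C - a n := fun m n => by linarith [(abs_le.1 (h m n)).1]
  have hb_bdd : BddBelow (range fun n : ℕ => (a n + C) / n) :=
    bddBelow_range_div_of_mul_le (r := -(C - a 1)) fun n => by
      have := hc.apply_mul_add_le n 1 0
      simp only [mul_one, add_zero] at this
      linarith [(abs_le.1 ha₀).1]
  have hc_bdd : BddBelow (range fun n : ℕ => (C - a n) / n) :=
    bddBelow_range_div_of_mul_le (r := -(a 1 + C)) fun n => by
      have := hb.apply_mul_add_le n 1 0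
      simp only [mul_one, add_zero] at this
      linarith [(abs_le.1 ha₀).2]
  have hlim : hc.lim = -hb.lim := by
    refine eq_neg_of_add_eq_zero_right <|
      tendsto_nhds_unique ((hb.tendsto_lim hb_bdd).add (hc.tendsto_lim hc_bdd)) ?_
    convert tendsto_const_div_atTop_nhds_zero_nat (2 * C) using 2
    ring
  refine ⟨hb.lim, fun n => ?_⟩
  rcases eq_or_ne n 0 with rfl | hn
  · simpa using ha₀
  have hb_le := hb.lim_le_div hb_bdd hn
  have hc_le := hc.lim_le_div hc_bdd hn
  rw [le_div_iff₀ (by positivity)] at hb_le hc_le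
  rw [hlim] at hc_le
  rw [abs_le]
  constructor <;> linarith

section BoundedSequences

variable {u v : ℕ → ℝ} {B : ℝ}

theorem isBoundedUnder_le_of_abs_le (hu : ∀ n, |u n| ≤ B) : IsBoundedUnder (· ≤ ·) atTop u :=
  (isBoundedUnder_le_abs.1 (isBoundedUnder_of ⟨B, hu⟩)).1

theorem isBoundedUnder_ge_of_abs_le (hu : ∀ n, |u n| ≤ B) : IsBoundedUnder (· ≥ ·) atTop u :=
  (isBoundedUnder_le_abs.1 (isBoundedUnder_of ⟨B, hu⟩)).2

theorem liminf_coe_eq_coe_liminf (hu : ∀ n, |u n| ≤ B) :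
    liminf (fun n => (u n : EReal)) atTop = ((liminf u atTop : ℝ) : EReal) :=
  (Monotone.map_liminf_of_continuousAt EReal.coe_strictMono.monotone u
    continuous_coe_real_ereal.continuousAt (isBoundedUnder_le_of_abs_le hu).isCoboundedUnder_ge
    (isBoundedUnder_ge_of_abs_le hu)).symm

theorem liminf_le_liminf_add (hu : ∀ n, |u n| ≤ B) (hv : ∀ n, |v n| ≤ B) {r : ℝ}
    (h : ∀ n, u n ≤ v n + r) : liminf u atTop ≤ liminf v atTop + r := by
  rw [← liminf_add_const atTop v r (isBoundedUnder_le_of_abs_le hv).isCoboundedUnder_ge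
    (isBoundedUnder_ge_of_abs_le hv)]
  refine liminf_le_liminf (Eventually.of_forall h) (isBoundedUnder_ge_of_abs_le hu) ?_
  exact (isBoundedUnder_le_of_abs_le (B := B + |r|) fun n =>
    (abs_add_le _ _).trans (add_le_add_left (hv n) _)).isCoboundedUnder_ge

theorem abs_liminf_sub_liminf_le (hu : ∀ n, |u n| ≤ B) (hv : ∀ n, |v n| ≤ B) {r : ℝ}
    (h : ∀ n, |u n - v n| ≤ r) : |liminf u atTop - liminf v atTop| ≤ r := by
  rw [abs_sub_le_iff, sub_le_iff_le_add', sub_le_iff_le_add']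
  constructor
  · exact liminf_le_liminf_add hu hv fun n => by linarith [(abs_le.1 (h n)).2]
  · exact liminf_le_liminf_add hv hu fun n => by linarith [(abs_le.1 (h n)).1]

theorem liminf_coe_add_mul_ne_bot_and_ne_top_iff {lam : ℝ} (hu : ∀ n : ℕ, |u n + n * lam| ≤ B)
    (lam' : ℝ) :
    (liminf (fun n : ℕ => ((u n + n * lam' : ℝ) : EReal)) atTop ≠ ⊥ ∧
      liminf (fun n : ℕ => ((u n + n * lam' : ℝ) : EReal)) atTop ≠ ⊤) ↔ lam' = lam := by
  refine ⟨fun ⟨hbot, htop⟩ => ?_, fun h => h ▸ ?_⟩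
  · have hsplit :
        (fun n : ℕ => (u n + n * lam) + n * (lam' - lam)) = fun n => u n + n * lam' := by
      ext n; ring
    by_contra hne
    rcases lt_or_gt_of_ne hne with hlt | hgt
    · refine hbot (Tendsto.liminf_eq (EReal.tendsto_coe_nhds_bot_iff.2 ?_))
      rw [← hsplit]
      exact tendsto_atBot_add_left_of_ge _ B (fun n => (abs_le.1 (hu n)).2)
        (tendsto_natCast_atTop_atTop.atTop_mul_const_of_neg (sub_neg.2 hlt))
    · refine htop (Tendsto.liminf_eq (EReal.tendsto_coe_nhds_top_iff.2 ?_))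
      rw [← hsplit]
      exact tendsto_atTop_add_left_of_le _ (-B) (fun n => (abs_le.1 (hu n)).1)
        (tendsto_natCast_atTop_atTop.atTop_mul_const (sub_pos.2 hgt))
  · rw [liminf_coe_eq_coe_liminf hu]
    exact ⟨EReal.coe_ne_bot _, EReal.coe_ne_top _⟩

end BoundedSequences

section MonotoneTranslationInvariant

variable {K : Type*} [TopologicalSpace K] {T : C(K, ℝ) → C(K, ℝ)}

theorem iterate_add_const (hconst : ∀ (U : C(K, ℝ)) (a : ℝ), T (U + const K a) = T U + const K a)
    (n : ℕ) (U : C(K, ℝ)) (a : ℝ) : T^[n] (U + const K a) = T^[n] U + const K a := by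
  induction n generalizing U with
  | zero => rfl
  | succ n ih => rw [Function.iterate_succ_apply, Function.iterate_succ_apply, hconst, ih]

theorem apply_le_apply_add_const (hmono : Monotone T)
    (hconst : ∀ (U : C(K, ℝ)) (a : ℝ), T (U + const K a) = T U + const K a)
    {U V : C(K, ℝ)} {a : ℝ} (h : U ≤ V + const K a) : T U ≤ T V + const K a :=
  (hmono h).trans_eq (hconst V a)

variable (hmono : Monotone T)
  (hconst : ∀ (U : C(K, ℝ)) (a : ℝ), T (U + const K a) = T U + const K a)
  {C : ℝ} (hosc : ∀ (n : ℕ) (x y : K), (T^[n] 0) x ≤ (T^[n] 0) y + C)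
include hmono hconst hosc

theorem abs_iterate_add_apply_sub_le (x₀ : K) (m n : ℕ) :
    |(T^[m + n] 0) x₀ - (T^[m] 0) x₀ - (T^[n] 0) x₀| ≤ C := by
  have hmono' := hmono.iterate m
  have hconst' := iterate_add_const hconst m
  rw [Function.iterate_add_apply]
  set W := T^[n] 0
  have hupper : T^[m] W ≤ T^[m] 0 + const K (W x₀ + C) :=
    apply_le_apply_add_const hmono' hconst' fun x => by simpa using hosc n x x₀
  have hlower : T^[m] 0 ≤ T^[m] W + const K (C - W x₀) :=
    apply_le_apply_add_const hmono' hconst' fun x => by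
      simpa using (by linarith [hosc n x₀ x] : 0 ≤ W x + (C - W x₀))
  have h₁ : (T^[m] W) x₀ ≤ (T^[m] 0) x₀ + (W x₀ + C) := hupper x₀
  have h₂ : (T^[m] 0) x₀ ≤ (T^[m] W) x₀ + (C - W x₀) := hlower x₀
  rw [abs_le]
  constructor <;> linarith

theorem exists_abs_iterate_apply_add_mul_le [Nonempty K] :
    ∃ lam : ℝ, ∀ (n : ℕ) (x : K), |(T^[n] 0) x + n * lam| ≤ 2 * C := by
  obtain ⟨x₀⟩ := ‹Nonempty K›
  obtain ⟨μ, hμ⟩ := exists_abs_sub_mul_le_of_abs_add_sub_le (a := fun k => (T^[k] 0) x₀)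
    (abs_iterate_add_apply_sub_le hmono hconst hosc x₀)
  refine ⟨-μ, fun n x => ?_⟩
  have h := abs_le.1 (hμ n)
  rw [abs_le]
  constructor <;> linarith [hosc n x x₀, hosc n x₀ x]

end MonotoneTranslationInvariant

/-- for a monotone operator on `C(K,ℝ)` commuting with addition of
constants and with uniformly Lipschitz iterates of `0`, there is a unique `λ` making
`liminf_n ((Λⁿ0)(x) + nλ)` finite, and the resulting function is `L`-Lipschitz. -/
theorem stmt11 (K : Type*) [MetricSpace K] [CompactSpace K] [Nonempty K]
    (Λ : C(K, ℝ) → C(K, ℝ))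
    (hmono : ∀ U V : C(K, ℝ), U ≤ V → Λ U ≤ Λ V)
    (hconst : ∀ (U : C(K, ℝ)) (a : ℝ), Λ (U + ContinuousMap.const K a) =
      Λ U + ContinuousMap.const K a)
    (L : ℝ) (hL : 0 ≤ L)
    (hlip : ∀ n : ℕ, 1 ≤ n → ∀ x y : K,
      |(Λ^[n] 0) x - (Λ^[n] 0) y| ≤ L * dist x y) :
    ∃ lam : ℝ,
      (∀ x : K, liminf (fun n : ℕ =>
          (((Λ^[n] 0) x + n * lam : ℝ) : EReal)) atTop ≠ ⊥ ∧
        liminf (fun n : ℕ => (((Λ^[n] 0) x + n * lam : ℝ) : EReal)) atTop ≠ ⊤) ∧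
      (∀ lam' : ℝ,
        (∀ x : K, liminf (fun n : ℕ =>
            (((Λ^[n] 0) x + n * lam' : ℝ) : EReal)) atTop ≠ ⊥ ∧
          liminf (fun n : ℕ => (((Λ^[n] 0) x + n * lam' : ℝ) : EReal)) atTop ≠ ⊤) →
        lam' = lam) ∧
      ∀ x y : K,
        |(liminf (fun n : ℕ => (((Λ^[n] 0) x + n * lam : ℝ) : EReal)) atTop).toReal -
          (liminf (fun n : ℕ => (((Λ^[n] 0) y + n * lam : ℝ) : EReal)) atTop).toReal| ≤
          L * dist x y := by
  have hlip₀ : ∀ (n : ℕ) (x y : K), |(Λ^[n] 0) x - (Λ^[n] 0) y| ≤ L * dist x y := by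
    rintro (_ | n) x y
    · simpa using mul_nonneg hL dist_nonneg
    · exact hlip (n + 1) n.succ_pos x y
  have hosc (n : ℕ) (x y : K) :
      (Λ^[n] 0) x ≤ (Λ^[n] 0) y + L * Metric.diam (univ : Set K) :=
    calc (Λ^[n] 0) x ≤ (Λ^[n] 0) y + L * dist x y := by linarith [(abs_le.1 (hlip₀ n x y)).2]
      _ ≤ _ := by
        gcongr
        exact Metric.dist_le_diam_of_mem Metric.isBounded_of_compactSpace (mem_univ x) (mem_univ y)
  obtain ⟨lam, hlam⟩ := exists_abs_iterate_apply_add_mul_le hmono hconst hosc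
  have hfinite (x : K) := liminf_coe_add_mul_ne_bot_and_ne_top_iff (hlam · x)
  obtain ⟨x₀⟩ := ‹Nonempty K›
  refine ⟨lam, fun x => (hfinite x lam).2 rfl, fun lam' h => (hfinite x₀ lam').1 (h x₀),
    fun x y => ?_⟩
  rw [liminf_coe_eq_coe_liminf (hlam · x), liminf_coe_eq_coe_liminf (hlam · y),
    EReal.toReal_coe, EReal.toReal_coe]
  exact abs_liminf_sub_liminf_le (hlam · x) (hlam · y) fun n => by simpa using hlip₀ n x y
end

section
/- Let K be a nonempty compact metric space and let Λ : C(K,ℝ) → C(K,ℝ) be a map such that U ≤ V implies ΛU ≤ ΛV, and Λ(U + a) = ΛU + a for every U ∈ C(K,ℝ) and every constant a ∈ ℝ. If U₁, U₂ ∈ C(K,ℝ) and λ₁, λ₂ ∈ ℝ satisfy ΛU₁ + λ₁ = U₁ and ΛU₂ + λ₂ = U₂, then λ₁ = λ₂. -/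
lemma stmt12_aux (K : Type*) [MetricSpace K] [CompactSpace K] [Nonempty K]
    (Λ : C(K, ℝ) → C(K, ℝ))
    (hmono : ∀ U V : C(K, ℝ), U ≤ V → Λ U ≤ Λ V)
    (hconst : ∀ (U : C(K, ℝ)) (a : ℝ), Λ (U + ContinuousMap.const K a) =
      Λ U + ContinuousMap.const K a)
    (U₁ U₂ : C(K, ℝ)) (lam₁ lam₂ : ℝ)
    (h₁ : Λ U₁ + ContinuousMap.const K lam₁ = U₁)
    (h₂ : Λ U₂ + ContinuousMap.const K lam₂ = U₂) :
    lam₂ ≤ lam₁ := by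
  obtain ⟨x₀, -, hx₀⟩ := isCompact_univ.exists_isMaxOn Set.univ_nonempty
    ((U₁ - U₂).continuous.continuousOn)
  set c : ℝ := (U₁ - U₂) x₀ with hc
  have hle : U₁ ≤ U₂ + ContinuousMap.const K c := by
    intro x
    have := hx₀ (Set.mem_univ x)
    simp only [Set.mem_setOf_eq, ContinuousMap.sub_apply] at this
    simpa [ContinuousMap.add_apply, hc] using by linarith [this]
  have h := hmono _ _ hle
  rw [hconst] at h
  have hx : (Λ U₁) x₀ ≤ (Λ U₂) x₀ + c := by simpa using h x₀
  have e₁ : Λ U₁ x₀ = U₁ x₀ - lam₁ := by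
    have := congrArg (fun f => f x₀) h₁
    simp only [ContinuousMap.add_apply, ContinuousMap.const_apply] at this
    linarith
  have e₂ : Λ U₂ x₀ = U₂ x₀ - lam₂ := by
    have := congrArg (fun f => f x₀) h₂
    simp only [ContinuousMap.add_apply, ContinuousMap.const_apply] at this
    linarith
  simp only [e₁, e₂, hc, ContinuousMap.sub_apply] at hx
  linarith

/-- uniqueness of the critical constant for a monotone operator on
`C(K,ℝ)` commuting with addition of constants. -/
theorem stmt12 (K : Type*) [MetricSpace K] [CompactSpace K] [Nonempty K]
    (Λ : C(K, ℝ) → C(K, ℝ))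
    (hmono : ∀ U V : C(K, ℝ), U ≤ V → Λ U ≤ Λ V)
    (hconst : ∀ (U : C(K, ℝ)) (a : ℝ), Λ (U + ContinuousMap.const K a) =
      Λ U + ContinuousMap.const K a)
    (U₁ U₂ : C(K, ℝ)) (lam₁ lam₂ : ℝ)
    (h₁ : Λ U₁ + ContinuousMap.const K lam₁ = U₁)
    (h₂ : Λ U₂ + ContinuousMap.const K lam₂ = U₂) :
    lam₁ = lam₂ :=
  le_antisymm (stmt12_aux K Λ hmono hconst U₂ U₁ lam₂ lam₁ h₂ h₁)
    (stmt12_aux K Λ hmono hconst U₁ U₂ lam₁ lam₂ h₁ h₂)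
end

section
/- Let p ≥ 1, β > 0, c ∈ ℝ^p and m > 0. Let Z : [−m,0] × ℝ^p → ℝ be continuous with Z(t,·) ℤ^p-periodic for each t, and let f : ℝ^p → ℝ be continuous and ℤ^p-periodic. Suppose u₁, u₂ : [−m,0] × ℝ^p → ℝ are continuous, ℤ^p-periodic in x, continuously differentiable in t and twice continuously differentiable in x on [−m,0] × ℝ^p, satisfy u₁(0,·) = u₂(0,·) = f, and for i = 1, 2 and all (t,x) ∈ [−m,0] × ℝ^p: (1/(2β))·Δu_i(t,x) + ∂ₜu_i(t,x) − ( (1/2)·‖c − ∇u_i(t,x)‖² + Z(t,x) ) = 0. Then u₁ = u₂ on [−m,0] × ℝ^p. -/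
open MeasureTheory Set
open scoped RealInnerProductSpace

/-! Comparison by the maximum principle. For `ε > 0` the function `u - v + ε t` is periodic in
`x`, so it attains its maximum on `[a, b] × ℝ^p`. At a maximum with `t < b` the gradients of `u`
and `v` agree and `Δ (u - v) ≤ 0`, so subtracting the two equations gives `∂ₜ (u - v) ≥ 0`,
whereas maximality in `t` gives `∂ₜ (u - v) + ε ≤ 0`. Hence the maximum sits at `t = b`, where
`u ≤ v`, so `u - v ≤ ε (b - t)` everywhere; letting `ε → 0` gives `u ≤ v`, and exchanging the
two solutions gives uniqueness. -/

open Filter Topology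

theorem IsLocalMax.deriv_deriv_nonpos {f : ℝ → ℝ} {a : ℝ} (hmax : IsLocalMax f a)
    (hc : ContinuousAt f a) : deriv (deriv f) a ≤ 0 := by
  by_contra! hpos
  -- by the second-derivative test `a` is also a local minimum, so `f` is locally constant
  have hmin := isLocalMin_of_deriv_deriv_pos hpos hmax.deriv_eq_zero hc
  have hconst : f =ᶠ[𝓝 a] fun _ => f a :=
    (hmax.and hmin).mono fun x hx => le_antisymm hx.1 hx.2
  have : deriv (deriv f) a = 0 := by
    rw [hconst.deriv.deriv_eq]
    simp
  exact hpos.ne' this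

theorem IsMaxOn.hasDerivWithinAt_nonpos_of_mem_Ico {ψ : ℝ → ℝ} {a b t ψ' : ℝ}
    (hmax : IsMaxOn ψ (Icc a b) t) (hψ : HasDerivWithinAt ψ ψ' (Icc a b) t) (ht : t ∈ Ico a b) :
    ψ' ≤ 0 := by
  have hcone : b - t ∈ posTangentConeAt (Icc a b) t := by
    apply sub_mem_posTangentConeAt_of_segment_subset
    rw [segment_eq_Icc ht.2.le]
    exact Icc_subset_Icc ht.1 le_rfl
  have h := hmax.localize.hasFDerivWithinAt_nonpos hψ.hasFDerivWithinAt hcone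
  simp only [ContinuousLinearMap.toSpanSingleton_apply, smul_eq_mul] at h
  exact nonpos_of_mul_nonpos_right h (sub_pos.2 ht.2)

section NormedSpace

variable {E : Type*} [NormedAddCommGroup E] [NormedSpace ℝ E]

theorem differentiableAt_fderiv_apply {f : E → ℝ} (hf : ContDiff ℝ 2 f) (e x : E) :
    DifferentiableAt ℝ (fun y => fderiv ℝ f y e) x :=
  ((hf.fderiv_right (by norm_num)).differentiable one_ne_zero x).clm_apply
    (differentiableAt_const e)

theorem deriv_deriv_comp_line {f : E → ℝ} (hf : ContDiff ℝ 2 f) (x e : E) :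
    deriv (deriv fun s : ℝ => f (x + s • e)) 0 = fderiv ℝ (fun y => fderiv ℝ f y e) x e := by
  have hline (s : ℝ) : HasDerivAt (fun s : ℝ => x + s • e) e s := by
    simpa using ((hasDerivAt_id s).smul_const e).const_add x
  have hderiv : deriv (fun s : ℝ => f (x + s • e)) = fun s => fderiv ℝ f (x + s • e) e :=
    funext fun s =>
      ((hf.differentiable (by norm_num) _).hasFDerivAt.comp_hasDerivAt s (hline s)).deriv
  rw [hderiv]
  simpa [Function.comp_def] using
    ((differentiableAt_fderiv_apply hf e _).hasFDerivAt.comp_hasDerivAt 0 (hline 0)).deriv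

end NormedSpace

section Euclidean

variable {p : ℕ}

theorem laplacian_nonpos_of_isLocalMax {f : EuclideanSpace ℝ (Fin p) → ℝ}
    (hf : ContDiff ℝ 2 f) {x : EuclideanSpace ℝ (Fin p)} (hmax : IsLocalMax f x) :
    laplacian f x ≤ 0 := by
  refine Finset.sum_nonpos fun i _ => ?_
  rw [← deriv_deriv_comp_line hf]
  have hline : Continuous fun s : ℝ => x + s • EuclideanSpace.single i 1 := by fun_prop
  refine IsLocalMax.deriv_deriv_nonpos ?_ (hf.continuous.comp hline).continuousAt
  have hmax' : IsLocalMax f (x + (0 : ℝ) • EuclideanSpace.single i 1) := by simpa using hmax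
  exact hmax'.comp_continuous (g := fun s : ℝ => x + s • EuclideanSpace.single i 1) (b := 0)
    hline.continuousAt

theorem laplacian_sub {g h : EuclideanSpace ℝ (Fin p) → ℝ} (hg : ContDiff ℝ 2 g)
    (hh : ContDiff ℝ 2 h) (x : EuclideanSpace ℝ (Fin p)) :
    laplacian (fun y => g y - h y) x = laplacian g x - laplacian h x := by
  unfold laplacian
  rw [← Finset.sum_sub_distrib]
  refine Finset.sum_congr rfl fun i _ => ?_
  set e := EuclideanSpace.single i (1 : ℝ)
  have hsub : (fun y => fderiv ℝ (fun z => g z - h z) y e) =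
      fun y => fderiv ℝ g y e - fderiv ℝ h y e :=
    funext fun y => by
      rw [fderiv_fun_sub (hg.differentiable (by norm_num) y) (hh.differentiable (by norm_num) y)]
      rfl
  rw [hsub, fderiv_fun_sub (differentiableAt_fderiv_apply hg e x)
    (differentiableAt_fderiv_apply hh e x)]
  rfl

theorem exists_intVec_add_mem_closedBall (x : EuclideanSpace ℝ (Fin p)) :
    ∃ k : Fin p → ℤ, x + intVec p k ∈ Metric.closedBall 0 √p := by
  refine ⟨fun i => -⌊x i⌋, ?_⟩
  set y := x + intVec p fun i => -⌊x i⌋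
  have hy (i : Fin p) : ‖y i‖ ^ 2 ≤ 1 := by
    have hfract : y i = Int.fract (x i) := by
      simp [y, intVec, Int.fract, sub_eq_add_neg]
    rw [hfract, Real.norm_of_nonneg (Int.fract_nonneg _)]
    nlinarith [Int.fract_nonneg (x i), Int.fract_lt_one (x i)]
  rw [mem_closedBall_zero_iff, EuclideanSpace.norm_eq]
  gcongr
  simpa using Finset.sum_le_sum (s := Finset.univ) fun i _ => hy i

theorem exists_forall_le_of_periodic {K : Set ℝ} (hK : IsCompact K) (hne : K.Nonempty)
    {φ : ℝ → EuclideanSpace ℝ (Fin p) → ℝ}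
    (hφ : ContinuousOn (fun q : ℝ × EuclideanSpace ℝ (Fin p) => φ q.1 q.2) (K ×ˢ univ))
    (hper : ∀ t ∈ K, ∀ x (k : Fin p → ℤ), φ t (x + intVec p k) = φ t x) :
    ∃ t₀ ∈ K, ∃ x₀, ∀ t ∈ K, ∀ x, φ t x ≤ φ t₀ x₀ := by
  obtain ⟨⟨t₀, x₀⟩, ⟨ht₀, -⟩, hmax⟩ :=
    (hK.prod (isCompact_closedBall 0 √p)).exists_isMaxOn
      (hne.prod (Metric.nonempty_closedBall.2 (Real.sqrt_nonneg _)))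
      (hφ.mono (prod_mono subset_rfl (subset_univ _)))
  refine ⟨t₀, ht₀, x₀, fun t ht x => ?_⟩
  obtain ⟨k, hk⟩ := exists_intVec_add_mem_closedBall x
  rw [← hper t ht x k]
  exact hmax (mk_mem_prod ht hk)

noncomputable def viscousHJOperator (κ : ℝ)
    (H : ℝ → EuclideanSpace ℝ (Fin p) → EuclideanSpace ℝ (Fin p) → ℝ) (s : Set ℝ)
    (u : ℝ → EuclideanSpace ℝ (Fin p) → ℝ) (t : ℝ) (x : EuclideanSpace ℝ (Fin p)) : ℝ :=
  κ * laplacian (u t) x + derivWithin (fun t' => u t' x) s t - H t x (gradient (u t) x)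

section Comparison

variable {κ : ℝ} {H : ℝ → EuclideanSpace ℝ (Fin p) → EuclideanSpace ℝ (Fin p) → ℝ}
  {u v : ℝ → EuclideanSpace ℝ (Fin p) → ℝ}

theorem viscousHJOperator_sub_le_of_isLocalMax (hκ : 0 ≤ κ) (s : Set ℝ) {t : ℝ}
    {x : EuclideanSpace ℝ (Fin p)} (hu : ContDiff ℝ 2 (u t)) (hv : ContDiff ℝ 2 (v t))
    (hmax : IsLocalMax (fun y => u t y - v t y) x) :
    viscousHJOperator κ H s u t x - viscousHJOperator κ H s v t x ≤
      derivWithin (fun t' => u t' x) s t - derivWithin (fun t' => v t' x) s t := by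
  have hfderiv : fderiv ℝ (u t) x = fderiv ℝ (v t) x := by
    have h := hmax.fderiv_eq_zero
    rwa [fderiv_fun_sub (hu.differentiable (by norm_num) x) (hv.differentiable (by norm_num) x),
      sub_eq_zero] at h
  have hgradient : gradient (u t) x = gradient (v t) x := by
    simp only [gradient, hfderiv]
  have hlaplacian : laplacian (u t) x - laplacian (v t) x ≤ 0 :=
    laplacian_sub hu hv x ▸ laplacian_nonpos_of_isLocalMax (hu.sub hv) hmax
  simp only [viscousHJOperator, hgradient]
  linarith [mul_nonpos_of_nonneg_of_nonpos hκ hlaplacian]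

variable {a b : ℝ}

theorem viscousHJ_penalized_max_eq_terminal (hκ : 0 ≤ κ) {ε : ℝ} (hε : 0 < ε) {t₀ : ℝ}
    {x₀ : EuclideanSpace ℝ (Fin p)} (ht₀ : t₀ ∈ Icc a b)
    (hut : DifferentiableWithinAt ℝ (fun t => u t x₀) (Icc a b) t₀)
    (hvt : DifferentiableWithinAt ℝ (fun t => v t x₀) (Icc a b) t₀)
    (hux : ContDiff ℝ 2 (u t₀)) (hvx : ContDiff ℝ 2 (v t₀))
    (hu : 0 ≤ viscousHJOperator κ H (Icc a b) u t₀ x₀)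
    (hv : viscousHJOperator κ H (Icc a b) v t₀ x₀ ≤ 0)
    (hmax : ∀ t ∈ Icc a b, ∀ x, u t x - v t x + ε * t ≤ u t₀ x₀ - v t₀ x₀ + ε * t₀) :
    t₀ = b := by
  by_contra hne
  have hspace : IsLocalMax (fun y => u t₀ y - v t₀ y) x₀ :=
    Eventually.of_forall fun y => by linarith [hmax t₀ ht₀ y]
  have htime : derivWithin (fun t => u t x₀) (Icc a b) t₀ -
      derivWithin (fun t => v t x₀) (Icc a b) t₀ + ε ≤ 0 := by
    refine IsMaxOn.hasDerivWithinAt_nonpos_of_mem_Ico (fun t ht => hmax t ht x₀) ?_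
      ⟨ht₀.1, lt_of_le_of_ne ht₀.2 hne⟩
    simpa using ((hut.hasDerivWithinAt.fun_sub hvt.hasDerivWithinAt).fun_add
      ((hasDerivAt_id t₀).const_mul ε).hasDerivWithinAt)
  linarith [viscousHJOperator_sub_le_of_isLocalMax (H := H) hκ (Icc a b) hux hvx hspace]

theorem viscousHJ_comparison (hκ : 0 ≤ κ)
    (hucont : ContinuousOn (fun q : ℝ × EuclideanSpace ℝ (Fin p) => u q.1 q.2) (Icc a b ×ˢ univ))
    (hvcont : ContinuousOn (fun q : ℝ × EuclideanSpace ℝ (Fin p) => v q.1 q.2) (Icc a b ×ˢ univ))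
    (huper : ∀ t ∈ Icc a b, ∀ x (k : Fin p → ℤ), u t (x + intVec p k) = u t x)
    (hvper : ∀ t ∈ Icc a b, ∀ x (k : Fin p → ℤ), v t (x + intVec p k) = v t x)
    (hut : ∀ x, DifferentiableOn ℝ (fun t => u t x) (Icc a b))
    (hvt : ∀ x, DifferentiableOn ℝ (fun t => v t x) (Icc a b))
    (hux : ∀ t ∈ Icc a b, ContDiff ℝ 2 (u t)) (hvx : ∀ t ∈ Icc a b, ContDiff ℝ 2 (v t))
    (hu : ∀ t ∈ Icc a b, ∀ x, 0 ≤ viscousHJOperator κ H (Icc a b) u t x)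
    (hv : ∀ t ∈ Icc a b, ∀ x, viscousHJOperator κ H (Icc a b) v t x ≤ 0)
    (hb : ∀ x, u b x ≤ v b x) :
    ∀ t ∈ Icc a b, ∀ x, u t x ≤ v t x := by
  intro t ht x
  have hpenalized (ε : ℝ) (hε : ε ∈ Ioi 0) : u t x - v t x ≤ ε * (b - t) := by
    obtain ⟨t₀, ht₀, x₀, hmax⟩ :=
      exists_forall_le_of_periodic (φ := fun t x => u t x - v t x + ε * t) isCompact_Icc
        ⟨t, ht⟩ ((hucont.sub hvcont).add (by fun_prop))
        fun t ht x k => by simp only [huper t ht x k, hvper t ht x k]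
    obtain rfl : t₀ = b := viscousHJ_penalized_max_eq_terminal hκ hε ht₀ (hut x₀ t₀ ht₀)
      (hvt x₀ t₀ ht₀) (hux t₀ ht₀) (hvx t₀ ht₀) (hu t₀ ht₀ x₀) (hv t₀ ht₀ x₀) hmax
    linarith [hmax t ht x, hb x₀]
  have hlim : Tendsto (fun ε : ℝ => ε * (b - t)) (𝓝[>] 0) (𝓝 0) :=
    ((continuous_mul_const (b - t)).tendsto' 0 0 (zero_mul _)).mono_left nhdsWithin_le_nhds
  exact sub_nonpos.1 (ge_of_tendsto hlim (eventually_nhdsWithin_of_forall hpenalized))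

end Comparison

end Euclidean

theorem stmt15_general (p : ℕ) (β : ℝ) (hβ : 0 < β)
    (c : EuclideanSpace ℝ (Fin p)) (m : ℝ)
    (Z : ℝ → EuclideanSpace ℝ (Fin p) → ℝ)
    (f : EuclideanSpace ℝ (Fin p) → ℝ)
    (u : Fin 2 → ℝ → EuclideanSpace ℝ (Fin p) → ℝ)
    (hucont : ∀ i, ContinuousOn (fun q : ℝ × EuclideanSpace ℝ (Fin p) => u i q.1 q.2)
      (Icc (-m) 0 ×ˢ univ))
    (huper : ∀ i, ∀ t ∈ Icc (-m) (0 : ℝ), ∀ x (k : Fin p → ℤ),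
      u i t (x + intVec p k) = u i t x)
    (hut : ∀ i x, ContDiffOn ℝ 1 (fun t => u i t x) (Icc (-m) 0))
    (hux : ∀ i, ∀ t ∈ Icc (-m) (0 : ℝ), ContDiff ℝ 2 (u i t))
    (hfinal : ∀ i, u i 0 = f)
    (hpde : ∀ i, ∀ t ∈ Icc (-m) (0 : ℝ), ∀ x,
      (1 / (2 * β)) * laplacian (u i t) x +
        derivWithin (fun s => u i s x) (Icc (-m) 0) t -
        ((1 / 2) * ‖c - gradient (u i t) x‖ ^ 2 + Z t x) = 0) :
    ∀ t ∈ Icc (-m) (0 : ℝ), ∀ x, u 0 t x = u 1 t x := by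
  have hle (i j : Fin 2) : ∀ t ∈ Icc (-m) (0 : ℝ), ∀ x, u i t x ≤ u j t x :=
    viscousHJ_comparison (κ := 1 / (2 * β)) (H := fun t x g => 1 / 2 * ‖c - g‖ ^ 2 + Z t x)
      (by positivity) (hucont i) (hucont j) (huper i) (huper j)
      (fun x => (hut i x).differentiableOn one_ne_zero)
      (fun x => (hut j x).differentiableOn one_ne_zero) (hux i) (hux j)
      (fun t ht x => (hpde i t ht x).ge) (fun t ht x => (hpde j t ht x).le)
      (fun x => by rw [hfinal i, hfinal j])
  exact fun t ht x => le_antisymm (hle 0 1 t ht x) (hle 1 0 t ht x)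

/-- uniqueness of classical periodic solutions of the viscous
Hamilton–Jacobi equation on `[−m,0]` with final condition `f`. -/
theorem stmt15 (p : ℕ) (hp : 1 ≤ p) (β : ℝ) (hβ : 0 < β)
    (c : EuclideanSpace ℝ (Fin p)) (m : ℝ) (hm : 0 < m)
    (Z : ℝ → EuclideanSpace ℝ (Fin p) → ℝ)
    (hZcont : ContinuousOn (fun q : ℝ × EuclideanSpace ℝ (Fin p) => Z q.1 q.2)
      (Icc (-m) 0 ×ˢ univ))
    (hZper : ∀ t ∈ Icc (-m) (0 : ℝ), ∀ x (k : Fin p → ℤ), Z t (x + intVec p k) = Z t x)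
    (f : EuclideanSpace ℝ (Fin p) → ℝ) (hfcont : Continuous f)
    (hfper : ∀ x (k : Fin p → ℤ), f (x + intVec p k) = f x)
    (u : Fin 2 → ℝ → EuclideanSpace ℝ (Fin p) → ℝ)
    (hucont : ∀ i, ContinuousOn (fun q : ℝ × EuclideanSpace ℝ (Fin p) => u i q.1 q.2)
      (Icc (-m) 0 ×ˢ univ))
    (huper : ∀ i, ∀ t ∈ Icc (-m) (0 : ℝ), ∀ x (k : Fin p → ℤ),
      u i t (x + intVec p k) = u i t x)
    (hut : ∀ i x, ContDiffOn ℝ 1 (fun t => u i t x) (Icc (-m) 0))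
    (hux : ∀ i, ∀ t ∈ Icc (-m) (0 : ℝ), ContDiff ℝ 2 (u i t))
    (hfinal : ∀ i, u i 0 = f)
    (hpde : ∀ i, ∀ t ∈ Icc (-m) (0 : ℝ), ∀ x,
      (1 / (2 * β)) * laplacian (u i t) x +
        derivWithin (fun s => u i s x) (Icc (-m) 0) t -
        ((1 / 2) * ‖c - gradient (u i t) x‖ ^ 2 + Z t x) = 0) :
    ∀ t ∈ Icc (-m) (0 : ℝ), ∀ x, u 0 t x = u 1 t x :=
  stmt15_general p β hβ c m Z f u hucont huper hut hux hfinal hpde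
end

section
/- Let p ≥ 1, m > 0, let μ be a Borel probability measure on 𝕋^p, and let C₁₆, C₁₇ : (−m,0] → [0,∞) be functions such that C₁₇(T) → 0 as T → −m from the right, and such that C₁₆ and C₁₇ are bounded on [−m+ε, 0] for every ε ∈ (0,m). Let 𝒟 be the set of all maps R : [−m,0] → P(𝕋^p) such that: R is continuous with respect to W₁; R(−m) = μ; there exists ρ : (−m,0] × 𝕋^p → ℝ with R(t) equal to the measure with density ρ(t,·) with respect to 𝓛^p for every t ∈ (−m,0]; and for every T ∈ (−m,0], the Lipschitz norm of ρ on [T,0] × 𝕋^p is at most C₁₆(T) and W₁(R(T), μ) ≤ C₁₇(T). Then 𝒟 is compact with respect to the distance (R₁,R₂) ↦ sup_{t∈[−m,0]} W₁(R₁(t), R₂(t)). -/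
/-!
Each curve of `𝒟` has densities whose Lipschitz norms on `[T, 0] × 𝕋^p` are bounded by
`C₁₆ T` uniformly along the sequence, so Arzelà–Ascoli on each `[Tₖ, 0] × 𝕋^p`, for a sequence
`Tₖ ↓ -m`, and a diagonal extraction give a subsequence whose densities converge uniformly on
every `[T, 0] × 𝕋^p` to some `g`; the Lipschitz bounds pass to `g`. Densities that are
`ε`-close give measures that are `diam(𝕋^p) ε`-close in `W₁` (the common mass stays in place,
the excess moves anywhere), so the curves converge in `W₁` uniformly on every `[T, 0]`, and the
triangle inequality (gluing of couplings) passes `W₁(R(T), μ) ≤ C₁₇ T` to the limit. Near `-m`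
all curves lie within `C₁₇ t → 0` of `μ`, which controls the supremum there and gives the
continuity of the limit curve at `-m`.
-/

open MeasureTheory Set Filter

/-- The `p`-dimensional torus `𝕋^p = ℝ^p/ℤ^p`, with its quotient metric and its Haar
probability measure (`volume`). -/
abbrev Torus (p : ℕ) := Fin p → AddCircle (1 : ℝ)

/-- The 1-Wasserstein distance: the infimum of `∫ dist(x,y) dγ` over all couplings `γ`. -/
noncomputable def W1 {X : Type*} [MetricSpace X] [MeasurableSpace X]
    (μ ν : Measure X) : ℝ :=
  sInf {r : ℝ | ∃ γ : Measure (X × X), IsProbabilityMeasure γ ∧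
    γ.map Prod.fst = μ ∧ γ.map Prod.snd = ν ∧ r = ∫ q, dist q.1 q.2 ∂γ}

/-- Membership in the family `𝒟`: a `W₁`-continuous curve of probability measures on
`[−m,0]` starting at `μ`, admitting on `(−m,0]` a density `ρ` with respect to the Haar
measure, whose Lipschitz norm on `[T,0] × 𝕋^p` (sup norm plus least Lipschitz constant)
is at most `C₁₆ T`, and with `W₁(R(T),μ) ≤ C₁₇ T` for all `T ∈ (−m,0]`. -/
def memD (p : ℕ) (m : ℝ) (μ : Measure (Torus p)) (C₁₆ C₁₇ : ℝ → ℝ)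
    (R : ℝ → Measure (Torus p)) : Prop :=
  (∀ t ∈ Icc (-m) (0 : ℝ), IsProbabilityMeasure (R t)) ∧
  (∀ t ∈ Icc (-m) (0 : ℝ), ∀ ε > (0 : ℝ), ∃ δ > (0 : ℝ),
    ∀ s ∈ Icc (-m) (0 : ℝ), |s - t| < δ → W1 (R s) (R t) < ε) ∧
  R (-m) = μ ∧
  (∃ ρ : ℝ → Torus p → ℝ,
    (∀ t ∈ Ioc (-m) (0 : ℝ),
      R t = (volume : Measure (Torus p)).withDensity fun x => ENNReal.ofReal (ρ t x)) ∧
    ∀ T ∈ Ioc (-m) (0 : ℝ), ∃ S K : ℝ, 0 ≤ S ∧ 0 ≤ K ∧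
      (∀ t ∈ Icc T (0 : ℝ), ∀ x, |ρ t x| ≤ S) ∧
      (∀ t ∈ Icc T (0 : ℝ), ∀ s ∈ Icc T (0 : ℝ), ∀ x y,
        |ρ t x - ρ s y| ≤ K * (|t - s| + dist x y)) ∧
      S + K ≤ C₁₆ T) ∧
  ∀ T ∈ Ioc (-m) (0 : ℝ), W1 (R T) μ ≤ C₁₇ T

open ProbabilityTheory Topology Function
open scoped ENNReal NNReal BoundedContinuousFunction

lemma integrable_dist_comp {X Y : Type*} [MetricSpace X] [CompactSpace X] [TopologicalSpace Y]
    [MeasurableSpace Y] [OpensMeasurableSpace Y] (ν : Measure Y) [IsFiniteMeasure ν] {f g : Y → X}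
    (hf : Continuous f) (hg : Continuous g) : Integrable (fun y => dist (f y) (g y)) ν :=
  .of_bound (hf.dist hg).aestronglyMeasurable (Metric.diam (univ : Set X)) <| ae_of_all _ fun _ =>
    (Real.norm_of_nonneg dist_nonneg).trans_le <|
      Metric.dist_le_diam_of_mem isCompact_univ.isBounded trivial trivial

lemma exists_measure_map_fst_map_snd_of_measure_univ_eq {X : Type*} [MeasurableSpace X]
    (ν₁ ν₂ : Measure X) [IsFiniteMeasure ν₁] [IsFiniteMeasure ν₂] (h : ν₁ univ = ν₂ univ) :
    ∃ π : Measure (X × X), IsFiniteMeasure π ∧ π.map Prod.fst = ν₁ ∧ π.map Prod.snd = ν₂ ∧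
      π univ = ν₁ univ := by
  by_cases hc : ν₁ univ = 0
  · refine ⟨0, inferInstance, ?_, ?_, by simp [hc]⟩
    · simpa using (Measure.measure_univ_eq_zero.mp hc).symm
    · simpa using (Measure.measure_univ_eq_zero.mp (h ▸ hc)).symm
  · have hc' : ν₁ univ ≠ ⊤ := measure_ne_top _ _
    have hπ : ((ν₁ univ)⁻¹ • ν₁.prod ν₂) univ = ν₁ univ := by
      rw [Measure.smul_apply, ← univ_prod_univ, Measure.prod_prod, ← h, smul_eq_mul, ← mul_assoc,
        ENNReal.inv_mul_cancel hc hc', one_mul]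
    refine ⟨(ν₁ univ)⁻¹ • ν₁.prod ν₂, ⟨by rw [hπ]; exact measure_lt_top _ _⟩, ?_, ?_, hπ⟩
    · rw [Measure.map_smul, Measure.map_fst_prod, ← h, smul_smul, ENNReal.inv_mul_cancel hc hc',
        one_smul]
    · rw [Measure.map_smul, Measure.map_snd_prod, smul_smul, ENNReal.inv_mul_cancel hc hc',
        one_smul]

section Wasserstein

variable {X : Type*} [MetricSpace X] [MeasurableSpace X]

lemma W1_nonneg (μ ν : Measure X) : 0 ≤ W1 μ ν :=
  Real.sInf_nonneg <| by
    rintro _ ⟨γ, -, -, -, rfl⟩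
    exact integral_nonneg fun _ => dist_nonneg

lemma W1_le_integral_dist {μ ν : Measure X} (γ : Measure (X × X)) [IsProbabilityMeasure γ]
    (h₁ : γ.map Prod.fst = μ) (h₂ : γ.map Prod.snd = ν) : W1 μ ν ≤ ∫ q, dist q.1 q.2 ∂γ :=
  csInf_le ⟨0, by rintro _ ⟨γ, -, -, -, rfl⟩; exact integral_nonneg fun _ => dist_nonneg⟩
    ⟨γ, ‹_›, h₁, h₂, rfl⟩

lemma exists_integral_dist_lt_W1_add (μ ν : Measure X) [IsProbabilityMeasure μ]
    [IsProbabilityMeasure ν] {ε : ℝ} (hε : 0 < ε) :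
    ∃ γ : Measure (X × X), IsProbabilityMeasure γ ∧ γ.map Prod.fst = μ ∧
      γ.map Prod.snd = ν ∧ ∫ q, dist q.1 q.2 ∂γ < W1 μ ν + ε := by
  have hlt : W1 μ ν < W1 μ ν + ε := lt_add_of_pos_right _ hε
  obtain ⟨_, ⟨γ, hγ, h₁, h₂, rfl⟩, hγlt⟩ := exists_lt_of_csInf_lt
    (by exact ⟨_, μ.prod ν, inferInstance, Measure.fst_prod, Measure.snd_prod, rfl⟩) hlt
  exact ⟨γ, hγ, h₁, h₂, hγlt⟩

lemma W1_comm (μ ν : Measure X) : W1 μ ν = W1 ν μ := by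
  have swap_mem : ∀ {μ ν : Measure X} {r : ℝ},
      (∃ γ : Measure (X × X), IsProbabilityMeasure γ ∧ γ.map Prod.fst = μ ∧
        γ.map Prod.snd = ν ∧ r = ∫ q, dist q.1 q.2 ∂γ) →
      ∃ γ : Measure (X × X), IsProbabilityMeasure γ ∧ γ.map Prod.fst = ν ∧
        γ.map Prod.snd = μ ∧ r = ∫ q, dist q.1 q.2 ∂γ := by
    rintro μ ν _ ⟨γ, hγ, h₁, h₂, rfl⟩
    refine ⟨γ.map MeasurableEquiv.prodComm,
      Measure.isProbabilityMeasure_map MeasurableEquiv.prodComm.measurable.aemeasurable,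
      Measure.fst_map_swap.trans h₂, Measure.snd_map_swap.trans h₁, ?_⟩
    rw [integral_map_equiv]
    exact integral_congr_ae (ae_of_all _ fun q => dist_comm q.1 q.2)
  exact congrArg sInf (Set.ext fun _ => ⟨swap_mem, swap_mem⟩)

variable [CompactSpace X] [BorelSpace X]

lemma W1_self (μ : Measure X) [IsProbabilityMeasure μ] : W1 μ μ = 0 := by
  have hdiag : Measurable fun x : X => (x, x) := measurable_id.prodMk measurable_id
  have := Measure.isProbabilityMeasure_map (μ := μ) hdiag.aemeasurable
  refine le_antisymm ?_ (W1_nonneg μ μ)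
  calc W1 μ μ ≤ ∫ q, dist q.1 q.2 ∂(μ.map fun x => (x, x)) :=
        W1_le_integral_dist _ ((Measure.map_map measurable_fst hdiag).trans Measure.map_id)
          ((Measure.map_map measurable_snd hdiag).trans Measure.map_id)
    _ = 0 := by
        rw [integral_map hdiag.aemeasurable
          (continuous_fst.dist continuous_snd).aestronglyMeasurable]
        simp

lemma exists_coupling_integral_dist_le_add (γ₁ γ₂ : Measure (X × X)) [IsProbabilityMeasure γ₁]
    [IsProbabilityMeasure γ₂] (h : γ₁.map Prod.snd = γ₂.map Prod.fst) :
    ∃ γ : Measure (X × X), IsProbabilityMeasure γ ∧ γ.map Prod.fst = γ₁.map Prod.fst ∧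
      γ.map Prod.snd = γ₂.map Prod.snd ∧
      ∫ q, dist q.1 q.2 ∂γ ≤ ∫ q, dist q.1 q.2 ∂γ₁ + ∫ q, dist q.1 q.2 ∂γ₂ := by
  have : Nonempty X := (nonempty_of_isProbabilityMeasure γ₁).map Prod.fst
  set γ₁' := γ₁.map Prod.swap
  -- draw the common middle point first, then the two outer points independently given it
  set τ := γ₂.fst ⊗ₘ (γ₁'.condKernel ×ₖ γ₂.condKernel)
  have hτ₁ : τ.map (Prod.map id Prod.fst) = γ₁' := by
    rw [← Measure.compProd_map measurable_fst, ← Kernel.fst_eq, Kernel.fst_prod,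
      show γ₂.fst = γ₁'.fst from (Measure.fst_map_swap.trans h).symm, Measure.disintegrate]
  have hτ₂ : τ.map (Prod.map id Prod.snd) = γ₂ := by
    rw [← Measure.compProd_map measurable_snd, ← Kernel.snd_eq, Kernel.snd_prod,
      Measure.disintegrate]
  have hm₁ : Measurable (Prod.map id Prod.fst : X × X × X → X × X) := by fun_prop
  have hm₂ : Measurable (Prod.map id Prod.snd : X × X × X → X × X) := by fun_prop
  refine ⟨τ.map Prod.snd, Measure.isProbabilityMeasure_map measurable_snd.aemeasurable, ?_, ?_, ?_⟩
  · calc (τ.map Prod.snd).map Prod.fst = (τ.map (Prod.map id Prod.fst)).map Prod.snd := by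
          rw [Measure.map_map measurable_fst measurable_snd, Measure.map_map measurable_snd hm₁]
          rfl
      _ = γ₁.map Prod.fst := by rw [hτ₁]; exact Measure.snd_map_swap
  · rw [← hτ₂, Measure.map_map measurable_snd measurable_snd, Measure.map_map measurable_snd hm₂]
    rfl
  · have hd₁ := integrable_dist_comp τ continuous_snd.fst continuous_fst
    have hd₂ := integrable_dist_comp τ continuous_fst continuous_snd.snd
    calc ∫ q, dist q.1 q.2 ∂(τ.map Prod.snd) = ∫ q, dist q.2.1 q.2.2 ∂τ :=
          integral_map measurable_snd.aemeasurable
            (continuous_fst.dist continuous_snd).aestronglyMeasurable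
      _ ≤ ∫ q, (dist q.2.1 q.1 + dist q.1 q.2.2) ∂τ :=
          integral_mono (integrable_dist_comp τ continuous_snd.fst continuous_snd.snd)
            (hd₁.add hd₂) fun q => dist_triangle _ _ _
      _ = ∫ q, dist q.2 q.1 ∂γ₁' + ∫ q, dist q.1 q.2 ∂γ₂ := by
          rw [integral_add hd₁ hd₂, ← hτ₁, ← hτ₂,
            integral_map hm₁.aemeasurable (continuous_snd.dist continuous_fst).aestronglyMeasurable,
            integral_map hm₂.aemeasurable (continuous_fst.dist continuous_snd).aestronglyMeasurable]
          rfl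
      _ = ∫ q, dist q.1 q.2 ∂γ₁ + ∫ q, dist q.1 q.2 ∂γ₂ := by
          rw [integral_map measurable_swap.aemeasurable
            (continuous_snd.dist continuous_fst).aestronglyMeasurable]
          simp

lemma W1_triangle (μ ν ρ : Measure X) [IsProbabilityMeasure μ] [IsProbabilityMeasure ν]
    [IsProbabilityMeasure ρ] : W1 μ ρ ≤ W1 μ ν + W1 ν ρ := by
  refine le_of_forall_pos_le_add fun ε hε => ?_
  obtain ⟨γ₁, _, h₁₁, h₁₂, hγ₁⟩ := exists_integral_dist_lt_W1_add μ ν (half_pos hε)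
  obtain ⟨γ₂, _, h₂₁, h₂₂, hγ₂⟩ := exists_integral_dist_lt_W1_add ν ρ (half_pos hε)
  obtain ⟨γ, _, h₁, h₂, hγ⟩ := exists_coupling_integral_dist_le_add γ₁ γ₂ (h₁₂.trans h₂₁.symm)
  have := W1_le_integral_dist γ (h₁.trans h₁₁) (h₂.trans h₂₂)
  linarith

lemma W1_le_of_tendsto {ν : ℕ → Measure X} {ν₀ μ : Measure X}
    (hν : ∀ n, IsProbabilityMeasure (ν n)) [IsProbabilityMeasure ν₀] [IsProbabilityMeasure μ]
    {C : ℝ} (hlim : Tendsto (fun n => W1 (ν n) ν₀) atTop (𝓝 0)) (hC : ∀ n, W1 (ν n) μ ≤ C) :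
    W1 ν₀ μ ≤ C := by
  refine ge_of_tendsto' (by simpa using hlim.add_const C) fun n => ?_
  calc W1 ν₀ μ ≤ W1 ν₀ (ν n) + W1 (ν n) μ := W1_triangle _ _ _
    _ ≤ W1 (ν n) ν₀ + C := by rw [W1_comm ν₀]; linarith [hC n]

lemma W1_add_le (ν ν₁ ν₂ : Measure X) [IsFiniteMeasure ν] [IsFiniteMeasure ν₁] [IsFiniteMeasure ν₂]
    [IsProbabilityMeasure (ν + ν₁)] (h : ν₁ univ = ν₂ univ) :
    W1 (ν + ν₁) (ν + ν₂) ≤ Metric.diam (univ : Set X) * ν₁.real univ := by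
  obtain ⟨π, _, hπ₁, hπ₂, hπ⟩ := exists_measure_map_fst_map_snd_of_measure_univ_eq ν₁ ν₂ h
  have hdiag : Measurable fun x : X => (x, x) := measurable_id.prodMk measurable_id
  set γ := ν.map (fun x => (x, x)) + π
  have : IsProbabilityMeasure γ := ⟨by
    rw [Measure.add_apply, Measure.map_apply hdiag .univ, preimage_univ, hπ, ← Measure.add_apply,
      measure_univ]⟩
  have hmarg : ∀ {f : X × X → X}, Measurable f → (∀ x, f (x, x) = x) →
      γ.map f = ν + π.map f := fun hf hfd => by
    rw [Measure.map_add _ _ hf, Measure.map_map hf hdiag]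
    simp only [comp_def, hfd, Measure.map_id']
  calc W1 (ν + ν₁) (ν + ν₂) ≤ ∫ q, dist q.1 q.2 ∂γ :=
        W1_le_integral_dist γ (by rw [hmarg measurable_fst fun _ => rfl, hπ₁])
          (by rw [hmarg measurable_snd fun _ => rfl, hπ₂])
    _ = ∫ q, dist q.1 q.2 ∂π := by
        rw [integral_add_measure (integrable_dist_comp _ continuous_fst continuous_snd)
          (integrable_dist_comp _ continuous_fst continuous_snd),
          integral_map hdiag.aemeasurable (continuous_fst.dist continuous_snd).aestronglyMeasurable]
        simp
    _ ≤ ∫ _q, Metric.diam (univ : Set X) ∂π :=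
        integral_mono (integrable_dist_comp _ continuous_fst continuous_snd) (integrable_const _)
          fun _ => Metric.dist_le_diam_of_mem isCompact_univ.isBounded trivial trivial
    _ = Metric.diam (univ : Set X) * ν₁.real univ := by
        rw [integral_const, smul_eq_mul, mul_comm, measureReal_def, hπ, measureReal_def]

lemma W1_withDensity_le (vol : Measure X) [IsProbabilityMeasure vol] {f g : X → ℝ}
    (hf : Measurable f) (hg : Measurable g)
    [IsProbabilityMeasure (vol.withDensity fun x => ENNReal.ofReal (f x))]
    [IsProbabilityMeasure (vol.withDensity fun x => ENNReal.ofReal (g x))]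
    {E : ℝ} (hE : ∀ x, |f x - g x| ≤ E) :
    W1 (vol.withDensity fun x => ENNReal.ofReal (f x))
      (vol.withDensity fun x => ENNReal.ofReal (g x)) ≤ Metric.diam (univ : Set X) * E := by
  set a : X → ℝ≥0∞ := fun x => ENNReal.ofReal (f x)
  set b : X → ℝ≥0∞ := fun x => ENNReal.ofReal (g x)
  have hmin : Measurable fun x => min (a x) (b x) := hf.ennreal_ofReal.min hg.ennreal_ofReal
  set ν := vol.withDensity fun x => min (a x) (b x)
  set ν₁ := vol.withDensity fun x => a x - min (a x) (b x)
  set ν₂ := vol.withDensity fun x => b x - min (a x) (b x)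
  have split : ∀ c : X → ℝ≥0∞, (∀ x, min (a x) (b x) ≤ c x) →
      vol.withDensity c = ν + vol.withDensity fun x => c x - min (a x) (b x) := fun c hc => by
    rw [← withDensity_add_left hmin]
    exact congrArg _ (funext fun x => (add_tsub_cancel_of_le (hc x)).symm)
  have ha : vol.withDensity a = ν + ν₁ := split a fun _ => min_le_left _ _
  have hb : vol.withDensity b = ν + ν₂ := split b fun _ => min_le_right _ _
  have : IsFiniteMeasure ν := isFiniteMeasure_of_le _ (ha ▸ Measure.le_add_right le_rfl)
  have : IsFiniteMeasure ν₁ := isFiniteMeasure_of_le _ (ha ▸ Measure.le_add_left le_rfl)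
  have : IsFiniteMeasure ν₂ := isFiniteMeasure_of_le _ (hb ▸ Measure.le_add_left le_rfl)
  have : IsProbabilityMeasure (ν + ν₁) := ha ▸ inferInstance
  have hmass : ν₁ univ = ν₂ univ := by
    have h1 : ν univ + ν₁ univ = ν univ + ν₂ univ := by
      rw [← Measure.add_apply, ← Measure.add_apply, ← ha, ← hb, measure_univ, measure_univ]
    exact (ENNReal.add_right_inj (measure_ne_top ν univ)).mp h1
  obtain ⟨x₀⟩ := nonempty_of_isProbabilityMeasure vol
  have hE₀ : 0 ≤ E := (abs_nonneg _).trans (hE x₀)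
  have hν₁ : ν₁.real univ ≤ E := by
    refine ENNReal.toReal_le_of_le_ofReal hE₀ ?_
    calc ν₁ univ = ∫⁻ x, a x - min (a x) (b x) ∂vol := by
          rw [withDensity_apply _ .univ, Measure.restrict_univ]
      _ ≤ ∫⁻ _x, ENNReal.ofReal E ∂vol := lintegral_mono fun x => by
          rw [tsub_min, tsub_le_iff_right]
          refine (ENNReal.ofReal_le_ofReal ?_).trans ENNReal.ofReal_add_le
          linarith [le_abs_self (f x - g x), hE x]
      _ = ENNReal.ofReal E := by simp
  rw [ha, hb]
  exact (W1_add_le ν ν₁ ν₂ hmass).trans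
    (mul_le_mul_of_nonneg_left hν₁ Metric.diam_nonneg)

end Wasserstein

lemma isProbabilityMeasure_withDensity_of_tendsto {X : Type*} [MeasurableSpace X]
    (vol : Measure X) [IsFiniteMeasure vol] {f : ℕ → X → ℝ} {g : X → ℝ} {C : ℝ}
    (hf : ∀ n, Measurable (f n)) (hbd : ∀ n x, |f n x| ≤ C)
    (hfg : ∀ x, Tendsto (fun n => f n x) atTop (𝓝 (g x)))
    (hprob : ∀ n, IsProbabilityMeasure (vol.withDensity fun x => ENNReal.ofReal (f n x))) :
    IsProbabilityMeasure (vol.withDensity fun x => ENNReal.ofReal (g x)) := by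
  constructor
  rw [withDensity_apply _ .univ, Measure.restrict_univ]
  refine tendsto_nhds_unique (tendsto_lintegral_of_dominated_convergence (fun _ => .ofReal C)
    (fun n => (hf n).ennreal_ofReal)
    (fun n => ae_of_all _ fun x => ENNReal.ofReal_le_ofReal ((le_abs_self _).trans (hbd n x)))
    (by rw [lintegral_const]; exact ENNReal.mul_ne_top ENNReal.ofReal_ne_top (measure_ne_top _ _))
    (ae_of_all _ fun x => ENNReal.tendsto_ofReal (hfg x))) ?_
  refine tendsto_const_nhds.congr fun n => ?_
  rw [← (hprob n).measure_univ, withDensity_apply _ .univ, Measure.restrict_univ]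

lemma isCompact_setOf_abs_le_lipschitzWith {Y : Type*} [MetricSpace Y] [CompactSpace Y] (B : ℝ)
    (L : ℝ≥0) : IsCompact {F : Y →ᵇ ℝ | (∀ y, |F y| ≤ B) ∧ LipschitzWith L F} := by
  have hbd : IsClosed {F : Y →ᵇ ℝ | ∀ y, |F y| ≤ B} := by
    simp only [ofPred_forall]
    exact isClosed_iInter fun y => isClosed_le (by fun_prop) continuous_const
  have hlip : IsClosed {F : Y →ᵇ ℝ | LipschitzWith L F} :=
    IsClosed.preimage (f := fun F : Y →ᵇ ℝ => (F : Y → ℝ))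
      BoundedContinuousFunction.continuous_coe (isClosed_setOfPred_lipschitzWith L)
  refine BoundedContinuousFunction.arzela_ascoli₂ (Icc (-B) B) isCompact_Icc _ (hbd.inter hlip)
    (fun F y hF => abs_le.mp (hF.1 y)) ?_
  exact (LipschitzWith.uniformEquicontinuous _ L fun F => F.2.2).equicontinuous

lemma exists_subseq_tendstoUniformlyOn_of_lipschitzOnWith {Y : Type*} [MetricSpace Y]
    {K : ℕ → Set Y} (hK : ∀ k, IsCompact (K k)) (u : ℕ → Y → ℝ) (B : ℕ → ℝ) (L : ℕ → ℝ≥0)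
    (hbd : ∀ n k, ∀ y ∈ K k, |u n y| ≤ B k) (hlip : ∀ n k, LipschitzOnWith (L k) (u n) (K k)) :
    ∃ g : Y → ℝ, ∃ φ : ℕ → ℕ, StrictMono φ ∧
      ∀ k, TendstoUniformlyOn (fun n => u (φ n)) g atTop (K k) := by
  have := fun k => isCompact_iff_compactSpace.mp (hK k)
  let F : ℕ → ∀ k, K k →ᵇ ℝ := fun n k =>
    .mkOfCompact ⟨(K k).domRestrict (u n), (hlip n k).to_restrict.continuous⟩
  obtain ⟨G, -, φ, hφ, hFG⟩ :=
    (isCompact_univ_pi fun k => isCompact_setOf_abs_le_lipschitzWith (B k) (L k)).isSeqCompact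
      (x := F) fun n => mem_univ_pi.2 fun k => ⟨fun y => hbd n k y y.2, (hlip n k).to_restrict⟩
  have hunif : ∀ k, TendstoUniformly (fun n (y : K k) => u (φ n) y) (G k) atTop := fun k =>
    BoundedContinuousFunction.tendsto_iff_tendstoUniformly.mp (tendsto_pi_nhds.mp hFG k)
  refine ⟨fun y => limUnder atTop fun n => u (φ n) y, φ, hφ, fun k => ?_⟩
  rw [tendstoUniformlyOn_iff_tendstoUniformly_comp_coe]
  convert hunif k using 1
  exact funext fun y => ((hunif k).tendsto_at y).limUnder_eq

-- Verbatim the Lipschitz-norm clause of `memD`, so that clause can be used as `LipNormLE` as is.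
def LipNormLE {X : Type*} [Dist X] (ρ : ℝ → X → ℝ) (T C : ℝ) : Prop :=
  ∃ S K : ℝ, 0 ≤ S ∧ 0 ≤ K ∧ (∀ t ∈ Icc T (0 : ℝ), ∀ x, |ρ t x| ≤ S) ∧
    (∀ t ∈ Icc T (0 : ℝ), ∀ s ∈ Icc T (0 : ℝ), ∀ x y, |ρ t x - ρ s y| ≤ K * (|t - s| + dist x y)) ∧
    S + K ≤ C

namespace LipNormLE

variable {X : Type*} [PseudoMetricSpace X] {ρ : ℝ → X → ℝ} {T C t s : ℝ}

lemma abs_le (h : LipNormLE ρ T C) (ht : t ∈ Icc T 0) (x : X) : |ρ t x| ≤ C := by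
  obtain ⟨S, K, -, hK, hS, -, hSK⟩ := h
  linarith [hS t ht x]

lemma abs_sub_le (h : LipNormLE ρ T C) (ht : t ∈ Icc T 0) (hs : s ∈ Icc T 0) (x y : X) :
    |ρ t x - ρ s y| ≤ C * (|t - s| + dist x y) := by
  obtain ⟨S, K, hS, -, -, hK, hSK⟩ := h
  exact (hK t ht s hs x y).trans
    (mul_le_mul_of_nonneg_right (by linarith) (by positivity))

lemma lipschitzOnWith (h : LipNormLE ρ T C) :
    LipschitzOnWith (2 * C).toNNReal (uncurry ρ) (Icc T 0 ×ˢ univ) := by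
  have hC : 0 ≤ C := by obtain ⟨S, K, hS, hK, -, -, hSK⟩ := h; linarith
  refine LipschitzOnWith.of_dist_le_mul fun q hq q' hq' => ?_
  rw [Real.coe_toNNReal _ (by positivity), Real.dist_eq, Prod.dist_eq, Real.dist_eq]
  calc |uncurry ρ q - uncurry ρ q'| ≤ C * (|q.1 - q'.1| + dist q.2 q'.2) :=
        h.abs_sub_le hq.1 hq'.1 _ _
    _ ≤ 2 * C * max |q.1 - q'.1| (dist q.2 q'.2) := by
        nlinarith [le_max_left |q.1 - q'.1| (dist q.2 q'.2),
          le_max_right |q.1 - q'.1| (dist q.2 q'.2)]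

lemma continuous (h : LipNormLE ρ T C) (ht : t ∈ Icc T 0) : Continuous (ρ t) :=
  (LipschitzWith.of_dist_le_mul (K := C.toNNReal) fun x y => by
    rw [Real.dist_eq]
    refine (h.abs_sub_le ht ht x y).trans ?_
    simpa using mul_le_mul_of_nonneg_right (Real.le_coe_toNNReal C) dist_nonneg).continuous

lemma of_tendsto {ρ : ℕ → ℝ → X → ℝ} {g : ℝ → X → ℝ} (h : ∀ n, LipNormLE (ρ n) T C)
    (hlim : ∀ t ∈ Icc T 0, ∀ x, Tendsto (fun n => ρ n t x) atTop (𝓝 (g t x))) :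
    LipNormLE g T C := by
  choose S K hS hK hbd hlip hSK using h
  obtain ⟨⟨S₀, K₀⟩, hmem, ψ, hψ, hSK₀⟩ := (isCompact_Icc.prod isCompact_Icc).tendsto_subseq
    (x := fun n => (S n, K n)) (s := Icc 0 C ×ˢ Icc 0 C) fun n =>
      ⟨⟨hS n, by linarith [hK n, hSK n]⟩, ⟨hK n, by linarith [hS n, hSK n]⟩⟩
  have hS₀ : Tendsto (fun j => S (ψ j)) atTop (𝓝 S₀) := (continuous_fst.tendsto _).comp hSK₀
  have hK₀ : Tendsto (fun j => K (ψ j)) atTop (𝓝 K₀) := (continuous_snd.tendsto _).comp hSK₀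
  have hg : ∀ t ∈ Icc T 0, ∀ x, Tendsto (fun j => ρ (ψ j) t x) atTop (𝓝 (g t x)) :=
    fun t ht x => (hlim t ht x).comp hψ.tendsto_atTop
  refine ⟨S₀, K₀, hmem.1.1, hmem.2.1, fun t ht x => ?_, fun t ht s hs x y => ?_, ?_⟩
  · exact le_of_tendsto_of_tendsto' (hg t ht x).abs hS₀ fun j => hbd _ t ht x
  · exact le_of_tendsto_of_tendsto' ((hg t ht x).sub (hg s hs y)).abs (hK₀.mul_const _)
      fun j => hlip _ t ht s hs x y
  · exact le_of_tendsto' (hS₀.add hK₀) fun j => hSK _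

end LipNormLE

lemma exists_subseq_tendstoUniformlyOn_of_lipNormLE {X : Type*} [MetricSpace X] [CompactSpace X]
    {a : ℝ} (ha : a < 0) {C : ℝ → ℝ} (ρ : ℕ → ℝ → X → ℝ)
    (h : ∀ n, ∀ T ∈ Ioc a 0, LipNormLE (ρ n) T (C T)) :
    ∃ g : ℝ → X → ℝ, ∃ φ : ℕ → ℕ, StrictMono φ ∧ ∀ T ∈ Ioc a 0,
      TendstoUniformlyOn (fun n => uncurry (ρ (φ n))) (uncurry g) atTop (Icc T 0 ×ˢ univ) := by
  obtain ⟨T, -, hT, hTa⟩ := exists_seq_strictAnti_tendsto' ha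
  have hTmem : ∀ k, T k ∈ Ioc a 0 := fun k => ⟨(hT k).1, (hT k).2.le⟩
  obtain ⟨g, φ, hφ, hconv⟩ := exists_subseq_tendstoUniformlyOn_of_lipschitzOnWith
    (K := fun k => Icc (T k) 0 ×ˢ univ) (fun k => isCompact_Icc.prod isCompact_univ)
    (fun n => uncurry (ρ n)) (fun k => C (T k)) (fun k => (2 * C (T k)).toNNReal)
    (fun n k q hq => (h n _ (hTmem k)).abs_le hq.1 q.2) fun n k => (h n _ (hTmem k)).lipschitzOnWith
  refine ⟨curry g, φ, hφ, fun t ht => ?_⟩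
  obtain ⟨k, hk⟩ := (hTa.eventually (gt_mem_nhds ht.1)).exists
  rw [uncurry_curry]
  exact (hconv k).mono (prod_mono (Icc_subset_Icc_left hk.le) subset_rfl)

lemma tendstoUniformlyOn_zero_Icc_of_le {a b : ℝ} (hab : a < b) {F : ℕ → ℝ → ℝ} {c : ℝ → ℝ}
    (hc : Tendsto c (𝓝[>] a) (𝓝 0)) (hF₀ : ∀ n t, 0 ≤ F n t) (hFa : ∀ n, F n a = 0)
    (hFc : ∀ n, ∀ t ∈ Ioc a b, F n t ≤ c t)
    (hF : ∀ T ∈ Ioc a b, TendstoUniformlyOn F 0 atTop (Icc T b)) :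
    TendstoUniformlyOn F 0 atTop (Icc a b) := by
  rw [Metric.tendstoUniformlyOn_iff]
  intro ε hε
  obtain ⟨u, hu, hcu⟩ := mem_nhdsGT_iff_exists_Ioo_subset.mp (hc.eventually (gt_mem_nhds hε))
  set T := min ((a + u) / 2) b
  have hT : T ∈ Ioc a b := ⟨lt_min (by linarith [mem_Ioi.mp hu]) hab, min_le_right _ _⟩
  have hTu : T < u := (min_le_left _ _).trans_lt (by linarith [mem_Ioi.mp hu])
  filter_upwards [Metric.tendstoUniformlyOn_iff.mp (hF T hT) ε hε] with n hn t ht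
  rcases le_or_gt T t with hTt | htT
  · exact hn t ⟨hTt, ht.2⟩
  rw [Pi.zero_apply, dist_zero_left, Real.norm_of_nonneg (hF₀ n t)]
  rcases ht.1.eq_or_lt with rfl | hat
  · rwa [hFa]
  · exact (hFc n t ⟨hat, ht.2⟩).trans_lt (hcu ⟨hat, htT.trans hTu⟩)

lemma tendsto_iSup_of_tendstoUniformlyOn {α : Type*} {S : Set α} {F : ℕ → α → ℝ}
    (hF₀ : ∀ n t, 0 ≤ F n t) (hF : TendstoUniformlyOn F 0 atTop S) :
    Tendsto (fun n => ⨆ t : S, F n t) atTop (𝓝 0) := by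
  rw [Metric.tendsto_atTop]
  intro ε hε
  obtain ⟨N, hN⟩ := eventually_atTop.mp (Metric.tendstoUniformlyOn_iff.mp hF (ε / 2) (half_pos hε))
  refine ⟨N, fun n hn => ?_⟩
  have hsup : ⨆ t : S, F n t ≤ ε / 2 := Real.iSup_le (fun t => by
    simpa [Real.norm_of_nonneg (hF₀ n t)] using (hN n hn t t.2).le) (half_pos hε).le
  rw [Real.dist_0_eq_abs, abs_of_nonneg (Real.iSup_nonneg fun t : S => hF₀ n t)]
  linarith

instance Torus.isProbabilityMeasure_volume (p : ℕ) :
    IsProbabilityMeasure (volume : Measure (Torus p)) :=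
  ⟨by rw [volume_pi, Measure.pi_univ]; simp [AddCircle.measure_univ]⟩

noncomputable def densityCurve {X : Type*} [MeasureSpace X] (m : ℝ) (μ : Measure X)
    (g : ℝ → X → ℝ) (t : ℝ) : Measure X :=
  if t = -m then μ else volume.withDensity fun x => ENNReal.ofReal (g t x)

section densityCurve

variable {X : Type*} [MeasureSpace X] {m t : ℝ} {μ : Measure X} {g : ℝ → X → ℝ}

lemma densityCurve_neg : densityCurve m μ g (-m) = μ := if_pos rfl

lemma densityCurve_of_ne (ht : t ≠ -m) :
    densityCurve m μ g t = volume.withDensity fun x => ENNReal.ofReal (g t x) := if_neg ht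

end densityCurve

structure DensityLimit (p : ℕ) (m : ℝ) (C₁₆ : ℝ → ℝ) (R : ℕ → ℝ → Measure (Torus p))
    (ρ : ℕ → ℝ → Torus p → ℝ) (g : ℝ → Torus p → ℝ) : Prop where
  eq_withDensity : ∀ n, ∀ t ∈ Ioc (-m) (0 : ℝ),
    R n t = volume.withDensity fun x => ENNReal.ofReal (ρ n t x)
  lipNormLE : ∀ n, ∀ T ∈ Ioc (-m) (0 : ℝ), LipNormLE (ρ n) T (C₁₆ T)
  tendstoUniformlyOn : ∀ T ∈ Ioc (-m) (0 : ℝ),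
    TendstoUniformlyOn (fun n => uncurry (ρ n)) (uncurry g) atTop (Icc T 0 ×ˢ univ)

namespace DensityLimit

variable {p : ℕ} {m T t : ℝ} {μ : Measure (Torus p)} [IsProbabilityMeasure μ] {C₁₆ C₁₇ : ℝ → ℝ}
  {R : ℕ → ℝ → Measure (Torus p)} {ρ : ℕ → ℝ → Torus p → ℝ} {g : ℝ → Torus p → ℝ}

lemma tendsto (h : DensityLimit p m C₁₆ R ρ g) (ht : t ∈ Ioc (-m) 0) (x : Torus p) :
    Tendsto (fun n => ρ n t x) atTop (𝓝 (g t x)) :=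
  (h.tendstoUniformlyOn t ht).tendsto_at (x := (t, x)) ⟨left_mem_Icc.2 ht.2, trivial⟩

lemma lipNormLE_limit (h : DensityLimit p m C₁₆ R ρ g) (hT : T ∈ Ioc (-m) 0) :
    LipNormLE g T (C₁₆ T) :=
  .of_tendsto (fun n => h.lipNormLE n T hT) fun _ ht x => h.tendsto ⟨hT.1.trans_le ht.1, ht.2⟩ x

lemma isProbabilityMeasure_densityCurve (h : DensityLimit p m C₁₆ R ρ g)
    (hR : ∀ n, memD p m μ C₁₆ C₁₇ (R n)) (ht : t ∈ Icc (-m) 0) :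
    IsProbabilityMeasure (densityCurve m μ g t) := by
  rcases ht.1.eq_or_lt with rfl | hlt
  · rw [densityCurve_neg]
    infer_instance
  have ht' : t ∈ Ioc (-m) 0 := ⟨hlt, ht.2⟩
  rw [densityCurve_of_ne hlt.ne']
  exact isProbabilityMeasure_withDensity_of_tendsto volume
    (fun n => ((h.lipNormLE n t ht').continuous (left_mem_Icc.2 ht.2)).measurable)
    (fun n => (h.lipNormLE n t ht').abs_le (left_mem_Icc.2 ht.2)) (h.tendsto ht')
    fun n => h.eq_withDensity n t ht' ▸ (hR n).1 t ht

lemma tendstoUniformlyOn_W1 (h : DensityLimit p m C₁₆ R ρ g)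
    (hR : ∀ n, memD p m μ C₁₆ C₁₇ (R n)) (hT : T ∈ Ioc (-m) 0) :
    TendstoUniformlyOn (fun n t => W1 (R n t) (densityCurve m μ g t)) 0 atTop (Icc T 0) := by
  set D := Metric.diam (univ : Set (Torus p))
  have hD : 0 ≤ D := Metric.diam_nonneg
  rw [Metric.tendstoUniformlyOn_iff]
  intro ε hε
  filter_upwards [Metric.tendstoUniformlyOn_iff.mp (h.tendstoUniformlyOn T hT) (ε / (D + 1))
    (by positivity)] with n hn t ht
  have ht' : t ∈ Ioc (-m) 0 := ⟨hT.1.trans_le ht.1, ht.2⟩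
  have hprob := (hR n).1 t (Ioc_subset_Icc_self ht')
  have hprob₀ := h.isProbabilityMeasure_densityCurve hR (Ioc_subset_Icc_self ht')
  rw [h.eq_withDensity n t ht'] at hprob ⊢
  rw [densityCurve_of_ne ht'.1.ne'] at hprob₀ ⊢
  rw [Pi.zero_apply, dist_zero_left, Real.norm_of_nonneg (W1_nonneg _ _)]
  have htt : t ∈ Icc t 0 := left_mem_Icc.2 ht.2
  calc _ ≤ D * (ε / (D + 1)) :=
        W1_withDensity_le volume ((h.lipNormLE n t ht').continuous htt).measurable
          ((h.lipNormLE_limit ht').continuous htt).measurable fun x => by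
            rw [abs_sub_comm, ← Real.dist_eq]
            exact (hn (t, x) ⟨ht, trivial⟩).le
    _ < ε := by
        rw [← mul_div_assoc, div_lt_iff₀ (by positivity)]
        nlinarith

lemma W1_densityCurve_le (h : DensityLimit p m C₁₆ R ρ g)
    (hR : ∀ n, memD p m μ C₁₆ C₁₇ (R n)) (ht : t ∈ Ioc (-m) 0) :
    W1 (densityCurve m μ g t) μ ≤ C₁₇ t := by
  have := h.isProbabilityMeasure_densityCurve hR (Ioc_subset_Icc_self ht)
  exact W1_le_of_tendsto (fun n => (hR n).1 t (Ioc_subset_Icc_self ht))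
    ((h.tendstoUniformlyOn_W1 hR ht).tendsto_at (left_mem_Icc.2 ht.2))
    fun n => (hR n).2.2.2.2 t ht

lemma tendsto_W1_densityCurve (h : DensityLimit p m C₁₆ R ρ g)
    (hR : ∀ n, memD p m μ C₁₆ C₁₇ (R n)) (hC₁₇ : Tendsto C₁₇ (𝓝[>] (-m)) (𝓝 0))
    (ht : t ∈ Icc (-m) 0) :
    Tendsto (fun s => W1 (densityCurve m μ g s) (densityCurve m μ g t)) (𝓝[Icc (-m) 0] t)
      (𝓝 0) := by
  rcases ht.1.eq_or_lt with rfl | hlt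
  · rw [densityCurve_neg, ← Ioc_insert_left ht.2, nhdsWithin_insert, tendsto_sup]
    constructor
    · simpa [densityCurve_neg, W1_self] using
        tendsto_pure_nhds (fun s => W1 (densityCurve m μ g s) μ) (-m)
    exact squeeze_zero' (.of_forall fun s => W1_nonneg _ _)
      (eventually_nhdsWithin_of_forall fun s hs => h.W1_densityCurve_le hR hs)
      (hC₁₇.mono_left (nhdsWithin_mono _ Ioc_subset_Ioi_self))
  obtain ⟨T, hmT, hTt⟩ := exists_between hlt
  have hT : T ∈ Ioc (-m) 0 := ⟨hmT, hTt.le.trans ht.2⟩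
  have hg := h.lipNormLE_limit hT
  have htT : t ∈ Icc T 0 := ⟨hTt.le, ht.2⟩
  have hlim : Tendsto (fun s => Metric.diam (univ : Set (Torus p)) * (C₁₆ T * |s - t|))
      (𝓝[Icc (-m) 0] t) (𝓝 0) :=
    ((by fun_prop : Continuous fun s : ℝ => Metric.diam (univ : Set (Torus p)) *
      (C₁₆ T * |s - t|)).tendsto' t 0 (by simp)).mono_left nhdsWithin_le_nhds
  refine squeeze_zero' (.of_forall fun s => W1_nonneg _ _) ?_ hlim
  filter_upwards [self_mem_nhdsWithin, mem_nhdsWithin_of_mem_nhds (Ioi_mem_nhds hTt)]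
    with s hs hsT
  have hsT' : s ∈ Icc T 0 := ⟨le_of_lt hsT, hs.2⟩
  have hprob := h.isProbabilityMeasure_densityCurve hR hs
  have hprob₀ := h.isProbabilityMeasure_densityCurve hR ht
  rw [densityCurve_of_ne (hT.1.trans hsT).ne'] at hprob ⊢
  rw [densityCurve_of_ne hlt.ne'] at hprob₀ ⊢
  exact W1_withDensity_le volume (hg.continuous hsT').measurable (hg.continuous htT).measurable
    fun x => by simpa using hg.abs_sub_le hsT' htT x x

lemma memD_densityCurve (h : DensityLimit p m C₁₆ R ρ g) (hR : ∀ n, memD p m μ C₁₆ C₁₇ (R n))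
    (hC₁₇ : Tendsto C₁₇ (𝓝[>] (-m)) (𝓝 0)) : memD p m μ C₁₆ C₁₇ (densityCurve m μ g) := by
  refine ⟨fun t ht => h.isProbabilityMeasure_densityCurve hR ht, fun t ht ε hε => ?_,
    densityCurve_neg, ⟨g, fun t ht => densityCurve_of_ne ht.1.ne',
      fun T hT => h.lipNormLE_limit hT⟩, fun T hT => h.W1_densityCurve_le hR hT⟩
  obtain ⟨δ, hδ, hδε⟩ :=
    Metric.tendsto_nhdsWithin_nhds.mp (h.tendsto_W1_densityCurve hR hC₁₇ ht) ε hε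
  refine ⟨δ, hδ, fun s hs hst => ?_⟩
  simpa [Real.dist_eq, abs_of_nonneg (W1_nonneg _ _)] using hδε hs (by rwa [Real.dist_eq])

lemma tendsto_iSup_W1_densityCurve (h : DensityLimit p m C₁₆ R ρ g)
    (hR : ∀ n, memD p m μ C₁₆ C₁₇ (R n)) (hm : 0 < m) (hC₁₇ : Tendsto C₁₇ (𝓝[>] (-m)) (𝓝 0)) :
    Tendsto (fun n => ⨆ t : Icc (-m) (0 : ℝ), W1 (R n t) (densityCurve m μ g t)) atTop (𝓝 0) := by
  refine tendsto_iSup_of_tendstoUniformlyOn (fun n t => W1_nonneg _ _)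
    (tendstoUniformlyOn_zero_Icc_of_le (neg_lt_zero.2 hm) (by simpa using hC₁₇.add hC₁₇)
      (fun n t => W1_nonneg _ _) (fun n => ?_) (fun n t ht => ?_)
      fun T hT => h.tendstoUniformlyOn_W1 hR hT)
  · rw [(hR n).2.2.1, densityCurve_neg, W1_self]
  · have := (hR n).1 t (Ioc_subset_Icc_self ht)
    have := h.isProbabilityMeasure_densityCurve hR (Ioc_subset_Icc_self ht)
    calc W1 (R n t) (densityCurve m μ g t) ≤ W1 (R n t) μ + W1 μ (densityCurve m μ g t) :=
          W1_triangle _ _ _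
      _ ≤ C₁₇ t + C₁₇ t := add_le_add ((hR n).2.2.2.2 t ht)
          ((W1_comm _ _).trans_le (h.W1_densityCurve_le hR ht))

end DensityLimit

theorem stmt16_general (p : ℕ) (m : ℝ) (hm : 0 < m)
    (μ : Measure (Torus p)) [IsProbabilityMeasure μ]
    (C₁₆ C₁₇ : ℝ → ℝ)
    (hC17lim : Tendsto C₁₇ (nhdsWithin (-m) (Ioi (-m))) (nhds 0)) :
    ∀ R : ℕ → ℝ → Measure (Torus p), (∀ n, memD p m μ C₁₆ C₁₇ (R n)) →
      ∃ R₀, memD p m μ C₁₆ C₁₇ R₀ ∧ ∃ φ : ℕ → ℕ, StrictMono φ ∧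
        Tendsto (fun n => ⨆ t : Icc (-m) (0 : ℝ), W1 (R (φ n) t) (R₀ t))
          atTop (nhds 0) := by
  intro R hR
  choose ρ hρ hρlip using fun n => (hR n).2.2.2.1
  obtain ⟨g, φ, hφ, hconv⟩ :=
    exists_subseq_tendstoUniformlyOn_of_lipNormLE (neg_lt_zero.2 hm) ρ hρlip
  have hlim : DensityLimit p m C₁₆ (fun n => R (φ n)) (fun n => ρ (φ n)) g :=
    ⟨fun n => hρ (φ n), fun n => hρlip (φ n), hconv⟩
  exact ⟨densityCurve m μ g, hlim.memD_densityCurve (fun n => hR (φ n)) hC17lim, φ, hφ,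
    hlim.tendsto_iSup_W1_densityCurve (fun n => hR (φ n)) hm hC17lim⟩

/-- `𝒟` is (sequentially) compact for the distance
`(R₁,R₂) ↦ sup_{t ∈ [−m,0]} W₁(R₁(t), R₂(t))`. -/
theorem stmt16 (p : ℕ) (hp : 1 ≤ p) (m : ℝ) (hm : 0 < m)
    (μ : Measure (Torus p)) [IsProbabilityMeasure μ]
    (C₁₆ C₁₇ : ℝ → ℝ)
    (hnonneg : ∀ T ∈ Ioc (-m) (0 : ℝ), 0 ≤ C₁₆ T ∧ 0 ≤ C₁₇ T)
    (hC17lim : Tendsto C₁₇ (nhdsWithin (-m) (Ioi (-m))) (nhds 0))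
    (hbdd : ∀ ε ∈ Ioo (0 : ℝ) m, ∃ B : ℝ, ∀ T ∈ Icc (-m + ε) (0 : ℝ),
      C₁₆ T ≤ B ∧ C₁₇ T ≤ B) :
    ∀ R : ℕ → ℝ → Measure (Torus p), (∀ n, memD p m μ C₁₆ C₁₇ (R n)) →
      ∃ R₀, memD p m μ C₁₆ C₁₇ R₀ ∧ ∃ φ : ℕ → ℕ, StrictMono φ ∧
        Tendsto (fun n => ⨆ t : Icc (-m) (0 : ℝ), W1 (R (φ n) t) (R₀ t))
          atTop (nhds 0) :=
  stmt16_general p m hm μ C₁₆ C₁₇ hC17lim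
end
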